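/- arXiv:2503.08383 — 4 statements merged into one kernel-verified Lean document; each statement's English description precedes it below -/
import Mathlib

section
/- Let Π₀ = {(x,y,t) ∈ ℍⁿ : t > 0} and let d_N(ξ) = inf{ N(ξ'⁻¹ξ) : ξ' ∈ ∂Π₀ } for ξ ∈ Π₀. Then for ξ = (x,y,t) ∈ Π₀ with r = √(|x|²+|y|²): if r > 0, then the cubic equation s³ + 2s = t/r² has a unique real solution s, and d_N(ξ) = (2r⁴s² − 3tr²s + t²)^{1/4}; if r = 0, then d_N(ξ) = t^{1/2}. In particular d_N(ξ) depends only on r and t. -/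
open MeasureTheory Real Set Filter

noncomputable section

/-- A point of the Heisenberg group ℍⁿ: ξ = (x, y, t). -/
abbrev Hpt (n : ℕ) : Type := (Fin n → ℝ) × (Fin n → ℝ) × ℝ

namespace Heis

variable {n : ℕ}

/-- Group multiplication on ℍⁿ. -/
def hmul (ξ η : Hpt n) : Hpt n :=
  (ξ.1 + η.1, ξ.2.1 + η.2.1,
    ξ.2.2 + η.2.2 + 2 * ∑ i, (ξ.1 i * η.2.1 i - ξ.2.1 i * η.1 i))

/-- Group inverse on ℍⁿ. -/
def hinv (ξ : Hpt n) : Hpt n := (-ξ.1, -ξ.2.1, -ξ.2.2)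

/-- The gauge (Korányi) quasi-norm N(ξ) = ((|x|²+|y|²)² + t²)^{1/4}. -/
def gaugeN (ξ : Hpt n) : ℝ :=
  (((∑ i, ξ.1 i ^ 2) + ∑ i, ξ.2.1 i ^ 2) ^ 2 + ξ.2.2 ^ 2) ^ ((1 : ℝ) / 4)

/-- r(ξ) = √(|x|² + |y|²). -/
def rr (ξ : Hpt n) : ℝ := Real.sqrt ((∑ i, ξ.1 i ^ 2) + ∑ i, ξ.2.1 i ^ 2)

/-- The Euclidean inner product on ℝ^{2n+1}. -/
def ip (ν ξ : Hpt n) : ℝ :=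
  (∑ i, ν.1 i * ξ.1 i) + (∑ i, ν.2.1 i * ξ.2.1 i) + ν.2.2 * ξ.2.2

/-- X_i u (ξ) = ∂u/∂x_i + 2 y_i ∂u/∂t at ξ. -/
def XD (u : Hpt n → ℝ) (ξ : Hpt n) (i : Fin n) : ℝ :=
  fderiv ℝ u ξ (Pi.single i 1, 0, 2 * ξ.2.1 i)

/-- Y_i u (ξ) = ∂u/∂y_i − 2 x_i ∂u/∂t at ξ. -/
def YD (u : Hpt n → ℝ) (ξ : Hpt n) (i : Fin n) : ℝ :=
  fderiv ℝ u ξ (0, Pi.single i 1, -(2 * ξ.1 i))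

/-- |∇_{ℍⁿ} u|(ξ). -/
def hgradNorm (u : Hpt n → ℝ) (ξ : Hpt n) : ℝ :=
  Real.sqrt (∑ i, (XD u ξ i ^ 2 + YD u ξ i ^ 2))

/-- ∇_{ℍⁿ}u · ∇_{ℍⁿ}v at ξ. -/
def hdot (u v : Hpt n → ℝ) (ξ : Hpt n) : ℝ :=
  ∑ i, (XD u ξ i * XD v ξ i + YD u ξ i * YD v ξ i)

/-- The horizontal p-Laplacian, pointwise:
Δ_{p,ℍⁿ}d = Σ_i [X_i(|∇_{ℍⁿ}d|^{p−2} X_i d) + Y_i(|∇_{ℍⁿ}d|^{p−2} Y_i d)]. -/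
def pLap (p : ℝ) (d : Hpt n → ℝ) (ξ : Hpt n) : ℝ :=
  ∑ i, (XD (fun η => hgradNorm d η ^ (p - 2) * XD d η i) ξ i
      + YD (fun η => hgradNorm d η ^ (p - 2) * YD d η i) ξ i)

/-- u ∈ C_c^∞(Ω). -/
def IsTest (Ω : Set (Hpt n)) (u : Hpt n → ℝ) : Prop :=
  ContDiff ℝ (⊤ : ℕ∞) u ∧ HasCompactSupport u ∧ tsupport u ⊆ Ω

/-- Gauge pseudodistance of ξ to the set B: inf_{b ∈ B} N(b⁻¹ξ). -/
def distN (B : Set (Hpt n)) (ξ : Hpt n) : ℝ :=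
  ⨅ b : B, gaugeN (hmul (hinv (b : Hpt n)) ξ)

/-- Distance of ξ to the set B induced by the quasi-norm ccρ: inf_{b ∈ B} ccρ(b⁻¹ξ). -/
def distCC (ccρ : Hpt n → ℝ) (B : Set (Hpt n)) (ξ : Hpt n) : ℝ :=
  ⨅ b : B, ccρ (hmul (hinv (b : Hpt n)) ξ)

/-- ξ' is a nearest point of B to ξ for the distance induced by ccρ. -/
def nearestCC (ccρ : Hpt n → ℝ) (B : Set (Hpt n)) (ξ' ξ : Hpt n) : Prop :=
  ξ' ∈ B ∧ ccρ (hmul (hinv ξ') ξ) = distCC ccρ B ξ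

/-- Characterization of the Carnot–Carathéodory distance to the origin on ℍⁿ:
ρ(ξ) = (φ/sin φ)·r with φ ∈ [0,π) determined by (2φ−sin 2φ)/(2sin²φ) = |t|/r² when r ≠ 0
(interpreting φ/sin φ as 1 when t = 0, i.e. φ = 0), and ρ(ξ) = √(π|t|) when r = 0. -/
def IsCCNorm (ccρ : Hpt n → ℝ) : Prop :=
  (∀ ξ : Hpt n, rr ξ = 0 → ccρ ξ = Real.sqrt (π * |ξ.2.2|)) ∧
  (∀ ξ : Hpt n, rr ξ ≠ 0 → ξ.2.2 = 0 → ccρ ξ = rr ξ) ∧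
  (∀ ξ : Hpt n, rr ξ ≠ 0 → ξ.2.2 ≠ 0 → ∀ φ : ℝ, 0 < φ → φ < π →
    (2 * φ - Real.sin (2 * φ)) / (2 * Real.sin φ ^ 2) = |ξ.2.2| / rr ξ ^ 2 →
    ccρ ξ = (φ / Real.sin φ) * rr ξ)

end Heis

open Heis in
private lemma HeisAux.cs {n : ℕ} (u v x y : Fin n → ℝ) :
    (∑ i, (u i * y i - v i * x i)) ^ 2 ≤
      ((∑ i, u i ^ 2) + ∑ i, v i ^ 2) * ((∑ i, x i ^ 2) + ∑ i, y i ^ 2) := by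
  have h := Finset.sum_mul_sq_le_sq_mul_sq Finset.univ (Sum.elim u v)
      (Sum.elim y (fun i => -x i))
  simp only [Fintype.sum_sum_type, Sum.elim_inl, Sum.elim_inr] at h
  calc (∑ i, (u i * y i - v i * x i)) ^ 2
      = ((∑ i, u i * y i) + ∑ i, v i * -x i) ^ 2 := by
        rw [← Finset.sum_add_distrib]
        congr 1; exact Finset.sum_congr rfl fun i _ => by ring
    _ ≤ ((∑ i, u i ^ 2) + ∑ i, v i ^ 2) * ((∑ i, y i ^ 2) + ∑ i, (-x i) ^ 2) := h
    _ = ((∑ i, u i ^ 2) + ∑ i, v i ^ 2) * ((∑ i, x i ^ 2) + ∑ i, y i ^ 2) := by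
        congr 1
        have : ∑ i, (-x i) ^ 2 = ∑ i, x i ^ 2 := Finset.sum_congr rfl fun i _ => by ring
        rw [this]; ring

private lemma HeisAux.scalar (ρ r s t θ : ℝ) (hρ : 0 ≤ ρ) (hr : 0 < r) (hs : 0 < s)
    (ht : t = r^2*(s^3+2*s)) (hθ : θ^2 ≤ (ρ*r)^2) :
    r^4*s^4*(1+s^2) ≤ ρ^4 + (t+2*θ)^2 := by
  have hθ' : -(ρ*r) ≤ θ := by nlinarith [sq_nonneg (θ + ρ*r), mul_nonneg hρ hr.le]
  rcases le_or_gt t (2*ρ*r) with hc | hc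
  · have h1 : r^2*(s^3+2*s) ≤ 2*ρ*r := by linarith [ht ▸ hc]
    have ha : (0:ℝ) ≤ r^2*(s^3+2*s) := by positivity
    have h2 : (r^2*(s^3+2*s))^2 ≤ (2*ρ*r)^2 := by nlinarith
    have h3 : ((r^2*(s^3+2*s))^2)^2 ≤ ((2*ρ*r)^2)^2 := by nlinarith [sq_nonneg (r^2*(s^3+2*s))]
    have hq : 16*(s^4*(1+s^2)) ≤ (s^3+2*s)^4 := by
      nlinarith [mul_nonneg (pow_nonneg hs.le 6) (show (0:ℝ) ≤ s^6+8*s^4+24*s^2+16 by positivity)]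
    have hr4 : (0:ℝ) < r^4 := by positivity
    nlinarith [sq_nonneg (t+2*θ), mul_le_mul_of_nonneg_left hq hr4.le]
  · have h0 : 0 ≤ t - 2*ρ*r := by linarith
    have h1 : 0 ≤ t + 2*θ := by nlinarith
    have h2 : (t - 2*ρ*r)^2 ≤ (t+2*θ)^2 := by nlinarith
    have key : r^4*s^4*(1+s^2) ≤ ρ^4 + (t-2*ρ*r)^2 := by
      nlinarith [mul_nonneg (sq_nonneg (ρ - r*s))
        (show (0:ℝ) ≤ (ρ+r*s)^2 + 2*r^2*s^2 + 4*r^2 by positivity)]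
    linarith

open Heis in
private lemma HeisAux.gauge_eq {n : ℕ} (ξ b : Hpt n) (hb : b.2.2 = 0) :
    gaugeN (hmul (hinv b) ξ) =
      ((((∑ i, (ξ.1 i - b.1 i) ^ 2) + ∑ i, (ξ.2.1 i - b.2.1 i) ^ 2)) ^ 2
        + (ξ.2.2 + 2 * ∑ i, ((ξ.1 i - b.1 i) * ξ.2.1 i - (ξ.2.1 i - b.2.1 i) * ξ.1 i)) ^ 2)
        ^ ((1 : ℝ) / 4) := by
  simp only [gaugeN, hmul, hinv, Pi.add_apply, Pi.neg_apply, hb, neg_zero, zero_add]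
  have e1 : ∑ i, (-b.1 i + ξ.1 i) ^ 2 = ∑ i, (ξ.1 i - b.1 i) ^ 2 :=
    Finset.sum_congr rfl fun i _ => by ring
  have e2 : ∑ i, (-b.2.1 i + ξ.2.1 i) ^ 2 = ∑ i, (ξ.2.1 i - b.2.1 i) ^ 2 :=
    Finset.sum_congr rfl fun i _ => by ring
  have e3 : ∑ i, (-b.1 i * ξ.2.1 i - -b.2.1 i * ξ.1 i)
      = ∑ i, ((ξ.1 i - b.1 i) * ξ.2.1 i - (ξ.2.1 i - b.2.1 i) * ξ.1 i) :=
    Finset.sum_congr rfl fun i _ => by ring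
  rw [e1, e2, e3]

open Heis in
private lemma HeisAux.gaugeN_nonneg {n : ℕ} (ξ : Hpt n) : 0 ≤ gaugeN ξ :=
  Real.rpow_nonneg (by positivity) _

open Heis in
/-- explicit formula for the gauge pseudodistance to the boundary of the
half-space Π₀ = {t > 0}; in particular it depends only on r and t. -/
theorem dN_halfspace_formula (n : ℕ) (hn : 1 ≤ n) (ξ : Hpt n) (ht : 0 < ξ.2.2) :
    (rr ξ = 0 → distN {η : Hpt n | η.2.2 = 0} ξ = Real.sqrt ξ.2.2) ∧
    (0 < rr ξ →
      (∃! s : ℝ, s ^ 3 + 2 * s = ξ.2.2 / rr ξ ^ 2) ∧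
      (∀ s : ℝ, s ^ 3 + 2 * s = ξ.2.2 / rr ξ ^ 2 →
        distN {η : Hpt n | η.2.2 = 0} ξ =
          (2 * rr ξ ^ 4 * s ^ 2 - 3 * ξ.2.2 * rr ξ ^ 2 * s + ξ.2.2 ^ 2) ^ ((1 : ℝ) / 4))) := by
  set B : Set (Hpt n) := {η : Hpt n | η.2.2 = 0} with hB
  set t : ℝ := ξ.2.2 with htdef
  set X : ℝ := ∑ i, ξ.1 i ^ 2 with hXdef
  set Y : ℝ := ∑ i, ξ.2.1 i ^ 2 with hYdef
  have hXY : (0:ℝ) ≤ X + Y := by positivity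
  have hr2 : rr ξ ^ 2 = X + Y := Real.sq_sqrt hXY
  have hBne : Nonempty B := ⟨⟨((0 : Fin n → ℝ), (0 : Fin n → ℝ), (0:ℝ)), rfl⟩⟩
  have hbdd : BddBelow (Set.range fun b : B => gaugeN (hmul (hinv (b : Hpt n)) ξ)) := by
    refine ⟨0, ?_⟩
    rintro z ⟨b, rfl⟩
    exact HeisAux.gaugeN_nonneg _
  have sqrt_t : (t ^ 2 : ℝ) ^ ((1:ℝ)/4) = Real.sqrt t := by
    rw [Real.sqrt_eq_rpow, ← Real.rpow_natCast t 2, ← Real.rpow_mul ht.le]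
    norm_num
  constructor
  · -- case r = 0
    intro hr0
    have hXY0 : X + Y = 0 := by rw [← hr2, hr0]; ring
    apply le_antisymm
    · have hbmem : (ξ.1, ξ.2.1, (0:ℝ)) ∈ B := rfl
      have hle := ciInf_le hbdd (⟨_, hbmem⟩ : B)
      refine le_trans hle ?_
      rw [HeisAux.gauge_eq ξ _ hbmem]
      rw [show ∑ i, (ξ.1 i - ξ.1 i) ^ 2 = (0:ℝ) from Finset.sum_eq_zero fun i _ => by ring,
        show ∑ i, (ξ.2.1 i - ξ.2.1 i) ^ 2 = (0:ℝ) from Finset.sum_eq_zero fun i _ => by ring,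
        show ∑ i, ((ξ.1 i - ξ.1 i) * ξ.2.1 i - (ξ.2.1 i - ξ.2.1 i) * ξ.1 i) = (0:ℝ) from
          Finset.sum_eq_zero fun i _ => by ring]
      rw [show ((0:ℝ) + 0) ^ 2 + (ξ.2.2 + 2 * 0) ^ 2 = t ^ 2 by rw [← htdef]; ring]
      rw [sqrt_t]
    · refine le_ciInf ?_
      rintro ⟨b, hb⟩
      rw [HeisAux.gauge_eq ξ b hb, ← sqrt_t]
      apply Real.rpow_le_rpow (by positivity) ?_ (by norm_num)
      have hcs := HeisAux.cs (fun i => ξ.1 i - b.1 i) (fun i => ξ.2.1 i - b.2.1 i) ξ.1 ξ.2.1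
      rw [← hXdef, ← hYdef, hXY0, mul_zero] at hcs
      have hθ0 : (∑ i, ((ξ.1 i - b.1 i) * ξ.2.1 i - (ξ.2.1 i - b.2.1 i) * ξ.1 i)) = 0 := by
        nlinarith [sq_nonneg (∑ i, ((ξ.1 i - b.1 i) * ξ.2.1 i - (ξ.2.1 i - b.2.1 i) * ξ.1 i))]
      rw [hθ0]
      have : (0:ℝ) ≤ ((∑ i, (ξ.1 i - b.1 i) ^ 2) + ∑ i, (ξ.2.1 i - b.2.1 i) ^ 2) ^ 2 := by
        positivity
      rw [← htdef]
      nlinarith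
  · -- case r > 0
    intro hrpos
    have hr2pos : (0:ℝ) < rr ξ ^ 2 := by positivity
    have hT : 0 < t / rr ξ ^ 2 := div_pos ht hr2pos
    -- existence & uniqueness of the cubic root
    have hmono : StrictMono (fun z : ℝ => z ^ 3 + 2 * z) := by
      intro a b hab
      show a ^ 3 + 2 * a < b ^ 3 + 2 * b
      nlinarith [sq_nonneg (a + b), sq_nonneg a, sq_nonneg b]
    have hexists : ∃ s : ℝ, s ^ 3 + 2 * s = t / rr ξ ^ 2 := by
      set T : ℝ := t / rr ξ ^ 2 with hTdef
      have hcont : ContinuousOn (fun z : ℝ => z ^ 3 + 2 * z) (Set.Icc 0 T) :=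
        (continuous_pow 3 |>.add (continuous_const.mul continuous_id)).continuousOn
      have hsub := intermediate_value_Icc hT.le hcont
      have hmem : T ∈ Set.Icc ((fun z : ℝ => z ^ 3 + 2 * z) 0) ((fun z : ℝ => z ^ 3 + 2 * z) T) := by
        constructor
        · simp; positivity
        · simp only
          nlinarith [pow_pos hT 3]
      obtain ⟨s, _, hs⟩ := hsub hmem
      exact ⟨s, hs⟩
    refine ⟨?_, ?_⟩
    · obtain ⟨s, hs⟩ := hexists
      exact ⟨s, hs, fun y hy => hmono.injective (by rw [hy, hs])⟩
    intro s hs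
    have ht' : t = rr ξ ^ 2 * (s ^ 3 + 2 * s) := by
      rw [hs]
      field_simp
    have hcube : 0 < s ^ 3 + 2 * s := hs ▸ hT
    have hspos : 0 < s := by
      by_contra hle
      push_neg at hle
      nlinarith [mul_nonneg (neg_nonneg.2 hle) (sq_nonneg s)]
    set M : ℝ := 2 * rr ξ ^ 4 * s ^ 2 - 3 * t * rr ξ ^ 2 * s + t ^ 2 with hMdef
    have hM : M = rr ξ ^ 4 * s ^ 4 * (1 + s ^ 2) := by
      rw [hMdef]
      linear_combination (t + rr ξ ^ 2 * (s ^ 3 + 2 * s) - 3 * rr ξ ^ 2 * s) * ht'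
    have hM0 : 0 ≤ M := by rw [hM]; positivity
    apply le_antisymm
    · -- upper bound via explicit minimizer
      have hbmem : ((fun i => ξ.1 i + s * ξ.2.1 i, fun i => ξ.2.1 i - s * ξ.1 i, (0:ℝ)) : Hpt n)
          ∈ B := rfl
      have hle := ciInf_le hbdd (⟨_, hbmem⟩ : B)
      refine le_trans hle ?_
      rw [HeisAux.gauge_eq ξ _ hbmem]
      have e1 : ∑ i, (ξ.1 i - (ξ.1 i + s * ξ.2.1 i)) ^ 2 = s ^ 2 * Y := by
        rw [hYdef, Finset.mul_sum]
        exact Finset.sum_congr rfl fun i _ => by ring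
      have e2 : ∑ i, (ξ.2.1 i - (ξ.2.1 i - s * ξ.1 i)) ^ 2 = s ^ 2 * X := by
        rw [hXdef, Finset.mul_sum]
        exact Finset.sum_congr rfl fun i _ => by ring
      have e3 : ∑ i, ((ξ.1 i - (ξ.1 i + s * ξ.2.1 i)) * ξ.2.1 i
          - (ξ.2.1 i - (ξ.2.1 i - s * ξ.1 i)) * ξ.1 i) = -(s * (X + Y)) := by
        rw [hXdef, hYdef, mul_add, Finset.mul_sum, Finset.mul_sum, ← Finset.sum_add_distrib,
          ← Finset.sum_neg_distrib]
        exact Finset.sum_congr rfl fun i _ => by ring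
      rw [e1, e2, e3]
      have key : (s ^ 2 * Y + s ^ 2 * X) ^ 2 + (ξ.2.2 + 2 * -(s * (X + Y))) ^ 2 = M := by
        rw [hMdef, ← htdef]
        have hXYr : X + Y = rr ξ ^ 2 := hr2.symm
        linear_combination ((s ^ 4 + 4 * s ^ 2) * ((X + Y) + rr ξ ^ 2) - 4 * s * t) * hXYr
          + (-(s * rr ξ ^ 2)) * ht'
      rw [key]
    · -- lower bound
      refine le_ciInf ?_
      rintro ⟨b, hb⟩
      rw [HeisAux.gauge_eq ξ b hb]
      apply Real.rpow_le_rpow hM0 ?_ (by norm_num)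
      set S : ℝ := (∑ i, (ξ.1 i - b.1 i) ^ 2) + ∑ i, (ξ.2.1 i - b.2.1 i) ^ 2 with hSdef
      set θ : ℝ := ∑ i, ((ξ.1 i - b.1 i) * ξ.2.1 i - (ξ.2.1 i - b.2.1 i) * ξ.1 i) with hθdef
      have hS0 : (0:ℝ) ≤ S := by rw [hSdef]; positivity
      have hcs := HeisAux.cs (fun i => ξ.1 i - b.1 i) (fun i => ξ.2.1 i - b.2.1 i) ξ.1 ξ.2.1
      rw [← hXdef, ← hYdef, ← hSdef, ← hθdef] at hcs
      set ρ : ℝ := Real.sqrt S with hρdef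
      have hρ2 : ρ ^ 2 = S := Real.sq_sqrt hS0
      have hθsq : θ ^ 2 ≤ (ρ * rr ξ) ^ 2 := by
        rw [mul_pow, hρ2, hr2]
        exact hcs
      have := HeisAux.scalar ρ (rr ξ) s t θ (Real.sqrt_nonneg S) hrpos hspos ht' hθsq
      have hρ4 : ρ ^ 4 = S ^ 2 := by rw [show ρ^4 = (ρ^2)^2 by ring, hρ2]
      rw [hρ4] at this
      rw [hM, ← htdef]
      linarith
end
end

section
/- Let Π₀ = {(x,y,t) ∈ ℍⁿ : t > 0} and d_N(ξ) = inf{ N(ξ'⁻¹ξ) : ξ' ∈ ∂Π₀ }. Then: (a) every point ξ ∈ Π₀ has a unique nearest boundary point, i.e. a unique ξ' ∈ ∂Π₀ with N(ξ'⁻¹ξ) = d_N(ξ); (b) conversely, given any boundary point ξ' = (x',y',0) ∈ ∂Π₀ and any ρ > 0, there exists a unique point ξ ∈ Π₀ whose nearest boundary point is ξ' and which satisfies d_N(ξ) = ρ. -/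
open MeasureTheory Real Set Filter

noncomputable section

open Heis

variable {n : ℕ}

def dnp_R2f (x y : Fin n → ℝ) : ℝ := (∑ i, x i^2) + ∑ i, y i^2

lemma dnp_gauge_sub (ξ' : Hpt n) (x y : Fin n → ℝ) (t : ℝ) (h0 : ξ'.2.2 = 0) :
    gaugeN (hmul (hinv ξ') ((x, y, t) : Hpt n)) =
    ((((∑ i, (x i - ξ'.1 i)^2) + ∑ i, (y i - ξ'.2.1 i)^2)^2
      + (t + 2*((∑ i, (x i - ξ'.1 i) * y i) - ∑ i, (y i - ξ'.2.1 i) * x i))^2)) ^ ((1:ℝ)/4) := by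
  unfold gaugeN hmul hinv
  simp only [h0, Pi.add_apply, Pi.neg_apply, neg_zero, zero_add]
  congr 1
  have e1 : ∑ i, (-ξ'.1 i + x i)^2 = ∑ i, (x i - ξ'.1 i)^2 :=
    Finset.sum_congr rfl fun i _ => by ring
  have e2 : ∑ i, (-ξ'.2.1 i + y i)^2 = ∑ i, (y i - ξ'.2.1 i)^2 :=
    Finset.sum_congr rfl fun i _ => by ring
  have e3 : (∑ i, (x i - ξ'.1 i) * y i) - ∑ i, (y i - ξ'.2.1 i) * x i
      = ∑ i, (-ξ'.1 i * y i - -ξ'.2.1 i * x i) := by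
    rw [← Finset.sum_sub_distrib]
    exact Finset.sum_congr rfl fun i _ => by ring
  rw [e1, e2, ← e3]

lemma dnp_Qexp (a b x y : Fin n → ℝ) (c : ℝ) :
    (∑ i, (a i - c * y i)^2) + ∑ i, (b i + c * x i)^2
    = ((∑ i, a i^2) + ∑ i, b i^2) - 2*c*((∑ i, a i * y i) - ∑ i, b i * x i)
      + c^2 * dnp_R2f x y := by
  have h1 : ∀ i ∈ Finset.univ, (a i - c*y i)^2 = a i^2 - (2*c)*(a i * y i) + c^2 * y i^2 :=
    fun i _ => by ring
  have h2 : ∀ i ∈ Finset.univ, (b i + c*x i)^2 = b i^2 + (2*c)*(b i * x i) + c^2 * x i^2 :=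
    fun i _ => by ring
  rw [Finset.sum_congr rfl h1, Finset.sum_congr rfl h2]
  unfold dnp_R2f
  simp only [Finset.sum_add_distrib, Finset.sum_sub_distrib, ← Finset.mul_sum]
  ring

lemma dnp_R2rot (x y : Fin n → ℝ) (l : ℝ) :
    dnp_R2f (fun i => x i + l*y i) (fun i => y i - l*x i) = (1+l^2) * dnp_R2f x y := by
  unfold dnp_R2f
  have h1 : ∀ i ∈ Finset.univ, (x i + l*y i)^2 = x i^2 + (2*l)*(x i * y i) + l^2 * y i^2 :=
    fun i _ => by ring
  have h2 : ∀ i ∈ Finset.univ, (y i - l*x i)^2 = y i^2 - (2*l)*(x i * y i) + l^2 * x i^2 :=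
    fun i _ => by ring
  rw [Finset.sum_congr rfl h1, Finset.sum_congr rfl h2]
  simp only [Finset.sum_add_distrib, Finset.sum_sub_distrib, ← Finset.mul_sum]
  ring

lemma dnp_sum_sq_zero {f : Fin n → ℝ} (h : ∑ i, f i ^ 2 = 0) : ∀ i, f i = 0 := by
  intro i
  have h2 := (Finset.sum_eq_zero_iff_of_nonneg (fun j _ => sq_nonneg (f j))).mp h i (Finset.mem_univ i)
  exact (pow_eq_zero_iff two_ne_zero).mp h2

lemma dnp_quant (x y x' y' : Fin n → ℝ) (t l : ℝ) (hl : 0 < l) (hR : 0 < dnp_R2f x y)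
    (ht : t = l*(l^2+2)*dnp_R2f x y) :
    l^4*(dnp_R2f x y)^2*(1+l^2) ≤
      (((∑ i, (x i - x' i)^2) + ∑ i, (y i - y' i)^2)^2
        + (t + 2*((∑ i, (x i - x' i)*y i) - ∑ i, (y i - y' i)*x i))^2)
    ∧ ((((∑ i, (x i - x' i)^2) + ∑ i, (y i - y' i)^2)^2
        + (t + 2*((∑ i, (x i - x' i)*y i) - ∑ i, (y i - y' i)*x i))^2)
          = l^4*(dnp_R2f x y)^2*(1+l^2)
        → x' = (fun i => x i + l*y i) ∧ y' = (fun i => y i - l*x i)) := by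
  have hR0 : dnp_R2f x y ≠ 0 := ne_of_gt hR
  set R2 := dnp_R2f x y with hR2
  set u := (∑ i, (x i - x' i)^2) + ∑ i, (y i - y' i)^2 with hu
  set s := (∑ i, (x i - x' i)*y i) - ∑ i, (y i - y' i)*x i with hs
  set c := s / R2 with hc
  clear_value R2 u s c
  have hQnn1 : (0:ℝ) ≤ ∑ i, ((x i - x' i) - c * y i)^2 :=
    Finset.sum_nonneg fun i _ => sq_nonneg _
  have hQnn2 : (0:ℝ) ≤ ∑ i, ((y i - y' i) + c * x i)^2 :=
    Finset.sum_nonneg fun i _ => sq_nonneg _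
  have hQ : (∑ i, ((x i - x' i) - c * y i)^2) + (∑ i, ((y i - y' i) + c * x i)^2)
      = u - 2*c*s + c^2 * R2 := by
    rw [dnp_Qexp (fun i => x i - x' i) (fun i => y i - y' i) x y c, hu, hs, hR2]
  have hQval : u - 2*c*s + c^2 * R2 = u - s^2/R2 := by
    rw [hc]; field_simp; ring
  have hCS : 0 ≤ u * R2 - s^2 := by
    have h1 : 0 ≤ u - s^2/R2 := by rw [← hQval, ← hQ]; linarith
    have := mul_nonneg h1 hR.le
    calc (0:ℝ) ≤ (u - s^2/R2) * R2 := this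
    _ = u * R2 - s^2 := by field_simp
  have hid : u^2 + (t+2*s)^2
      = l^4*R2^2*(1+l^2) + 2*l^2*(u*R2 - s^2) + (u - l^2*R2)^2 + 2*(l^2+2)*(s+l*R2)^2 := by
    rw [ht]; ring
  have hterm1 : 0 ≤ 2*l^2*(u*R2 - s^2) := by positivity
  have hB : (0:ℝ) ≤ (u - l^2*R2)^2 := sq_nonneg _
  have hC : (0:ℝ) ≤ 2*(l^2+2)*(s+l*R2)^2 := by positivity
  constructor
  · linarith [hid, hterm1, hB, hC]
  · intro heq
    have hA0 : 2*l^2*(u*R2 - s^2) = 0 := by linarith [hid, heq]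
    have h2 : (u - l^2*R2)^2 = 0 := by linarith [hid, heq]
    have hC0 : 2*(l^2+2)*(s+l*R2)^2 = 0 := by linarith [hid, heq]
    have h3 : (s + l*R2)^2 = 0 := by
      have hpos : (0:ℝ) < 2*(l^2+2) := by positivity
      rcases mul_eq_zero.mp hC0 with h | h
      · exact absurd h (ne_of_gt hpos)
      · exact h
    have huR : u*R2 - s^2 = 0 := by
      have hpos : (0:ℝ) < 2*l^2 := by positivity
      rcases mul_eq_zero.mp hA0 with h | h
      · exact absurd h (ne_of_gt hpos)
      · exact h
    have hQ0 : (∑ i, ((x i - x' i) - c * y i)^2) + (∑ i, ((y i - y' i) + c * x i)^2) = 0 := by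
      rw [hQ, hQval]
      have : u - s^2/R2 = (u*R2 - s^2)/R2 := by field_simp
      rw [this, huR, zero_div]
    have hsv : s = -(l*R2) := by
      have := (pow_eq_zero_iff two_ne_zero).mp h3; linarith
    have hcv : c = -l := by rw [hc, hsv]; field_simp
    have hQ1 : ∑ i, ((x i - x' i) - c * y i)^2 = 0 := by linarith
    have hQ2 : ∑ i, ((y i - y' i) + c * x i)^2 = 0 := by linarith
    have e1 := dnp_sum_sq_zero hQ1
    have e2 := dnp_sum_sq_zero hQ2
    constructor
    · funext i
      have h := e1 i; rw [hcv] at h; linarith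
    · funext i
      have h := e2 i; rw [hcv] at h; linarith

lemma dnp_gaugeN_nonneg (ξ : Hpt n) : 0 ≤ gaugeN ξ := by
  unfold gaugeN; positivity

lemma dnp_distN_le (ξ ξ' : Hpt n) (h : ξ'.2.2 = 0) :
    distN {η : Hpt n | η.2.2 = 0} ξ ≤ gaugeN (hmul (hinv ξ') ξ) := by
  unfold distN
  exact ciInf_le ⟨0, by rintro z ⟨b, rfl⟩; exact dnp_gaugeN_nonneg _⟩
    (⟨ξ', h⟩ : ({η : Hpt n | η.2.2 = 0} : Set (Hpt n)))

lemma dnp_le_distN (ξ : Hpt n) (cst : ℝ)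
    (h : ∀ ξ' : Hpt n, ξ'.2.2 = 0 → cst ≤ gaugeN (hmul (hinv ξ') ξ)) :
    cst ≤ distN {η : Hpt n | η.2.2 = 0} ξ := by
  have : Nonempty ({η : Hpt n | η.2.2 = 0} : Set (Hpt n)) :=
    ⟨⟨((fun _ => 0), (fun _ => 0), 0), rfl⟩⟩
  unfold distN
  exact le_ciInf fun b => h b b.2

lemma dnp_rpow_quarter_inj {A B : ℝ} (hA : 0 ≤ A) (hB : 0 ≤ B)
    (h : A ^ ((1:ℝ)/4) = B ^ ((1:ℝ)/4)) : A = B :=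
  Real.rpow_left_injOn (by norm_num) hA hB h

lemma dnp_pow4_quarter {A : ℝ} (hA : 0 ≤ A) : (A^(4:ℕ)) ^ ((1:ℝ)/4) = A := by
  rw [← Real.rpow_natCast A 4, ← Real.rpow_mul hA]
  norm_num

lemma dnp_masterA (x y : Fin n → ℝ) (t l : ℝ) (hl : 0 < l) (hR : 0 < dnp_R2f x y)
    (ht : t = l*(l^2+2)*dnp_R2f x y) :
    gaugeN (hmul (hinv (((fun i => x i + l*y i), (fun i => y i - l*x i), 0) : Hpt n))
        ((x,y,t) : Hpt n)) = (l^4*(dnp_R2f x y)^2*(1+l^2)) ^ ((1:ℝ)/4)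
    ∧ distN {η : Hpt n | η.2.2 = 0} ((x,y,t) : Hpt n) = (l^4*(dnp_R2f x y)^2*(1+l^2)) ^ ((1:ℝ)/4)
    ∧ ∀ ξ' : Hpt n, ξ'.2.2 = 0 →
        gaugeN (hmul (hinv ξ') ((x,y,t) : Hpt n)) = distN {η : Hpt n | η.2.2 = 0} ((x,y,t) : Hpt n) →
        ξ' = (((fun i => x i + l*y i), (fun i => y i - l*x i), 0) : Hpt n) := by
  have htarget_nn : 0 ≤ l^4*(dnp_R2f x y)^2*(1+l^2) := by positivity
  have hg0 : gaugeN (hmul (hinv (((fun i => x i + l*y i), (fun i => y i - l*x i), 0) : Hpt n))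
      ((x,y,t) : Hpt n)) = (l^4*(dnp_R2f x y)^2*(1+l^2)) ^ ((1:ℝ)/4) := by
    rw [dnp_gauge_sub _ x y t rfl]
    congr 1
    have e1 : ∑ i, (x i - (x i + l*y i))^2 = l^2 * ∑ i, y i^2 := by
      rw [Finset.mul_sum]; exact Finset.sum_congr rfl fun i _ => by ring
    have e2 : ∑ i, (y i - (y i - l*x i))^2 = l^2 * ∑ i, x i^2 := by
      rw [Finset.mul_sum]; exact Finset.sum_congr rfl fun i _ => by ring
    have e3 : ∑ i, (x i - (x i + l*y i)) * y i = -(l * ∑ i, y i^2) := by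
      rw [← neg_mul, Finset.mul_sum]; exact Finset.sum_congr rfl fun i _ => by ring
    have e4 : ∑ i, (y i - (y i - l*x i)) * x i = l * ∑ i, x i^2 := by
      rw [Finset.mul_sum]; exact Finset.sum_congr rfl fun i _ => by ring
    rw [e1, e2, e3, e4, ht]
    unfold dnp_R2f
    ring
  refine ⟨hg0, ?_, ?_⟩
  · have hle : distN {η : Hpt n | η.2.2 = 0} ((x,y,t) : Hpt n)
        ≤ (l^4*(dnp_R2f x y)^2*(1+l^2)) ^ ((1:ℝ)/4) := by
      rw [← hg0]; exact dnp_distN_le _ _ rfl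
    have hge : (l^4*(dnp_R2f x y)^2*(1+l^2)) ^ ((1:ℝ)/4)
        ≤ distN {η : Hpt n | η.2.2 = 0} ((x,y,t) : Hpt n) := by
      apply dnp_le_distN
      intro ξ' h0
      rw [dnp_gauge_sub ξ' x y t h0]
      exact Real.rpow_le_rpow htarget_nn (dnp_quant x y ξ'.1 ξ'.2.1 t l hl hR ht).1 (by norm_num)
    linarith
  · intro ξ' h0 heq
    -- distN value
    have hd : distN {η : Hpt n | η.2.2 = 0} ((x,y,t) : Hpt n)
        = (l^4*(dnp_R2f x y)^2*(1+l^2)) ^ ((1:ℝ)/4) := by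
      have hle : distN {η : Hpt n | η.2.2 = 0} ((x,y,t) : Hpt n)
          ≤ (l^4*(dnp_R2f x y)^2*(1+l^2)) ^ ((1:ℝ)/4) := by
        rw [← hg0]; exact dnp_distN_le _ _ rfl
      have hge : (l^4*(dnp_R2f x y)^2*(1+l^2)) ^ ((1:ℝ)/4)
          ≤ distN {η : Hpt n | η.2.2 = 0} ((x,y,t) : Hpt n) := by
        apply dnp_le_distN
        intro ξ'' h0'
        rw [dnp_gauge_sub ξ'' x y t h0']
        exact Real.rpow_le_rpow htarget_nn (dnp_quant x y ξ''.1 ξ''.2.1 t l hl hR ht).1 (by norm_num)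
      linarith
    rw [hd, dnp_gauge_sub ξ' x y t h0] at heq
    have hbase : (((∑ i, (x i - ξ'.1 i)^2) + ∑ i, (y i - ξ'.2.1 i)^2)^2
        + (t + 2*((∑ i, (x i - ξ'.1 i) * y i) - ∑ i, (y i - ξ'.2.1 i) * x i))^2)
        = l^4*(dnp_R2f x y)^2*(1+l^2) :=
      dnp_rpow_quarter_inj (by positivity) htarget_nn heq
    obtain ⟨hx', hy'⟩ := (dnp_quant x y ξ'.1 ξ'.2.1 t l hl hR ht).2 hbase
    obtain ⟨a, b, c⟩ := ξ'
    simp only at hx' hy' h0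
    rw [hx', hy', h0]

lemma dnp_masterA0 (x y : Fin n → ℝ) (t : ℝ) (htp : 0 < t) (hR : dnp_R2f x y = 0) :
    gaugeN (hmul (hinv ((x, y, 0) : Hpt n)) ((x,y,t) : Hpt n)) = (t^2) ^ ((1:ℝ)/4)
    ∧ distN {η : Hpt n | η.2.2 = 0} ((x,y,t) : Hpt n) = (t^2) ^ ((1:ℝ)/4)
    ∧ ∀ ξ' : Hpt n, ξ'.2.2 = 0 →
        gaugeN (hmul (hinv ξ') ((x,y,t) : Hpt n)) = distN {η : Hpt n | η.2.2 = 0} ((x,y,t) : Hpt n) →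
        ξ' = ((x, y, 0) : Hpt n) := by
  have hxs : ∑ i, x i ^ 2 = 0 := by
    have h1 : (0:ℝ) ≤ ∑ i, x i^2 := Finset.sum_nonneg fun i _ => sq_nonneg _
    have h2 : (0:ℝ) ≤ ∑ i, y i^2 := Finset.sum_nonneg fun i _ => sq_nonneg _
    unfold dnp_R2f at hR; linarith
  have hys : ∑ i, y i ^ 2 = 0 := by
    have h1 : (0:ℝ) ≤ ∑ i, x i^2 := Finset.sum_nonneg fun i _ => sq_nonneg _
    unfold dnp_R2f at hR; linarith
  have hx := dnp_sum_sq_zero hxs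
  have hy := dnp_sum_sq_zero hys
  have hbase : ∀ ξ' : Hpt n,
      (((∑ i, (x i - ξ'.1 i)^2) + ∑ i, (y i - ξ'.2.1 i)^2)^2
        + (t + 2*((∑ i, (x i - ξ'.1 i) * y i) - ∑ i, (y i - ξ'.2.1 i) * x i))^2)
      = ((∑ i, (x i - ξ'.1 i)^2) + ∑ i, (y i - ξ'.2.1 i)^2)^2 + t^2 := by
    intro ξ'
    have e3 : ∑ i, (x i - ξ'.1 i) * y i = 0 :=
      Finset.sum_eq_zero fun i _ => by rw [hy i]; ring
    have e4 : ∑ i, (y i - ξ'.2.1 i) * x i = 0 :=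
      Finset.sum_eq_zero fun i _ => by rw [hx i]; ring
    rw [e3, e4]; ring
  have hg0 : gaugeN (hmul (hinv ((x, y, 0) : Hpt n)) ((x,y,t) : Hpt n)) = (t^2) ^ ((1:ℝ)/4) := by
    rw [dnp_gauge_sub _ x y t rfl, hbase]
    congr 1
    have e1 : ∑ i, (x i - x i)^2 = 0 := Finset.sum_eq_zero fun i _ => by ring
    have e2 : ∑ i, (y i - y i)^2 = 0 := Finset.sum_eq_zero fun i _ => by ring
    simp only at e1 e2 ⊢
    rw [e1, e2]; ring
  have hd : distN {η : Hpt n | η.2.2 = 0} ((x,y,t) : Hpt n) = (t^2) ^ ((1:ℝ)/4) := by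
    have hle := dnp_distN_le ((x,y,t) : Hpt n) ((x,y,0) : Hpt n) rfl
    rw [hg0] at hle
    have hge : (t^2) ^ ((1:ℝ)/4) ≤ distN {η : Hpt n | η.2.2 = 0} ((x,y,t) : Hpt n) := by
      apply dnp_le_distN
      intro ξ' h0
      rw [dnp_gauge_sub ξ' x y t h0, hbase]
      apply Real.rpow_le_rpow (by positivity) _ (by norm_num)
      nlinarith [sq_nonneg ((∑ i, (x i - ξ'.1 i)^2) + ∑ i, (y i - ξ'.2.1 i)^2)]
    linarith
  refine ⟨hg0, hd, ?_⟩
  intro ξ' h0 heq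
  rw [hd, dnp_gauge_sub ξ' x y t h0, hbase] at heq
  have hb2 : ((∑ i, (x i - ξ'.1 i)^2) + ∑ i, (y i - ξ'.2.1 i)^2)^2 + t^2 = t^2 :=
    dnp_rpow_quarter_inj (by positivity) (by positivity) heq
  have hu0 : (∑ i, (x i - ξ'.1 i)^2) + ∑ i, (y i - ξ'.2.1 i)^2 = 0 := by
    have := sq_nonneg ((∑ i, (x i - ξ'.1 i)^2) + ∑ i, (y i - ξ'.2.1 i)^2)
    have h1 : (0:ℝ) ≤ ∑ i, (x i - ξ'.1 i)^2 := Finset.sum_nonneg fun i _ => sq_nonneg _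
    have h2 : (0:ℝ) ≤ ∑ i, (y i - ξ'.2.1 i)^2 := Finset.sum_nonneg fun i _ => sq_nonneg _
    nlinarith
  have h1 : ∑ i, (x i - ξ'.1 i)^2 = 0 := by
    have h2 : (0:ℝ) ≤ ∑ i, (y i - ξ'.2.1 i)^2 := Finset.sum_nonneg fun i _ => sq_nonneg _
    have h3 : (0:ℝ) ≤ ∑ i, (x i - ξ'.1 i)^2 := Finset.sum_nonneg fun i _ => sq_nonneg _
    linarith
  have h2 : ∑ i, (y i - ξ'.2.1 i)^2 = 0 := by
    have h3 : (0:ℝ) ≤ ∑ i, (x i - ξ'.1 i)^2 := Finset.sum_nonneg fun i _ => sq_nonneg _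
    linarith
  have ex := dnp_sum_sq_zero h1
  have ey := dnp_sum_sq_zero h2
  obtain ⟨a, b, c⟩ := ξ'
  simp only at ex ey h0
  rw [h0]
  have ha : a = x := funext fun i => by have := ex i; linarith
  have hb : b = y := funext fun i => by have := ey i; linarith
  rw [ha, hb]
theorem dnp_exists_lam (c : ℝ) (hc : 0 < c) : ∃! l : ℝ, 0 < l ∧ l^3 + 2*l = c := by
  have hcont : ContinuousOn (fun l : ℝ => l^3 + 2*l) (Set.Icc 0 c) := by fun_prop
  have h01 : (0:ℝ) ≤ c := hc.le
  have hmem : c ∈ Set.Icc ((0:ℝ)^3 + 2*0) (c^3 + 2*c) := by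
    constructor
    · nlinarith
    · nlinarith [pow_pos hc 3]
  obtain ⟨l, hl, hfl⟩ := intermediate_value_Icc h01 hcont hmem
  simp only at hfl
  have hl0 : 0 < l := by
    rcases lt_or_eq_of_le hl.1 with h | h
    · exact h
    · exfalso; rw [← h] at hfl; norm_num at hfl; linarith
  refine ⟨l, ⟨hl0, hfl⟩, ?_⟩
  rintro m ⟨hm, hfm⟩
  have h : (m - l) * (m^2 + m*l + l^2 + 2) = 0 := by linear_combination hfm - hfl
  have h2 : 0 < m^2 + m*l + l^2 + 2 := by nlinarith [sq_nonneg m, sq_nonneg l, mul_pos hm hl0]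
  rcases mul_eq_zero.mp h with h | h
  · linarith
  · linarith

theorem dnp_exists_mu (R2 ρ : ℝ) (hR : 0 < R2) (hρ : 0 < ρ) :
    ∃! m : ℝ, 0 < m ∧ m^4 * R2^2 = ρ^4 * (1 + m^2) := by
  set D := Real.sqrt (ρ^8 + 4*R2^2*ρ^4) with hDdef
  have hDnn : 0 ≤ D := Real.sqrt_nonneg _
  have hD2 : D^2 = ρ^8 + 4*R2^2*ρ^4 := Real.sq_sqrt (by positivity)
  set K := (ρ^4 + D)/(2*R2^2) with hKdef
  have hK : 0 < K := div_pos (by positivity) (by positivity)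
  have h1 : 2*R2^2*K = ρ^4 + D := by rw [hKdef]; field_simp
  have hD : D = 2*R2^2*K - ρ^4 := by linarith
  rw [hD] at hD2
  have hKe : R2^2 * K^2 = ρ^4 * K + ρ^4 := by
    have h4 : (4*R2^2) * (R2^2*K^2) = (4*R2^2) * (ρ^4*K + ρ^4) := by linear_combination hD2
    exact mul_left_cancel₀ (by positivity) h4
  have key : ∀ s : ℝ, s^2 = K → s^4 * R2^2 = ρ^4 * (1 + s^2) := by
    intro s h2
    have h4 : s^4 = K^2 := by rw [show (4:ℕ) = 2*2 from rfl, pow_mul, h2]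
    rw [h4, h2]; linarith
  have h2 : (Real.sqrt K)^2 = K := Real.sq_sqrt hK.le
  refine ⟨Real.sqrt K, ⟨Real.sqrt_pos.mpr hK, key _ h2⟩, ?_⟩
  rintro m ⟨hm, hme⟩
  set s := Real.sqrt K with hs
  have hspos : 0 < s := Real.sqrt_pos.mpr hK
  have hse : s^4 * R2^2 = ρ^4 * (1 + s^2) := key _ h2
  have hgt1 : R2^2 * m^2 > ρ^4 := by nlinarith [hme, mul_pos hm hm, pow_pos hρ 4]
  have hgt2 : R2^2 * s^2 > ρ^4 := by nlinarith [hse, mul_pos hspos hspos, pow_pos hρ 4]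
  have hfac : (m^2 - s^2) * (R2^2*(m^2 + s^2) - ρ^4) = 0 := by
    linear_combination hme - hse
  have hpos : 0 < R2^2*(m^2 + s^2) - ρ^4 := by nlinarith [mul_pos hspos hspos]
  have hms : m^2 = s^2 := by
    rcases mul_eq_zero.mp hfac with h | h
    · linarith
    · linarith
  nlinarith [hms, hm, hspos]

lemma dnp_R2f_nonneg (x y : Fin n → ℝ) : 0 ≤ dnp_R2f x y := by
  unfold dnp_R2f; positivity


open Heis in
/-- for the gauge pseudodistance on Π₀ = {t > 0}: (a) every ξ ∈ Π₀ has a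
unique nearest boundary point; (b) given ξ' ∈ ∂Π₀ and ρ₀ > 0 there is a unique ξ ∈ Π₀ with
nearest boundary point ξ' and d_N(ξ) = ρ₀. -/
theorem dN_nearest_points (n : ℕ) (hn : 1 ≤ n) :
    (∀ ξ : Hpt n, 0 < ξ.2.2 →
      ∃! ξ' : Hpt n, ξ'.2.2 = 0 ∧
        gaugeN (hmul (hinv ξ') ξ) = distN {η : Hpt n | η.2.2 = 0} ξ) ∧
    (∀ ξ' : Hpt n, ξ'.2.2 = 0 → ∀ ρ₀ : ℝ, 0 < ρ₀ →
      ∃! ξ : Hpt n, 0 < ξ.2.2 ∧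
        gaugeN (hmul (hinv ξ') ξ) = distN {η : Hpt n | η.2.2 = 0} ξ ∧
        distN {η : Hpt n | η.2.2 = 0} ξ = ρ₀) := by
  constructor
  · rintro ⟨x, y, t⟩ ht
    change 0 < t at ht
    rcases eq_or_lt_of_le (dnp_R2f_nonneg x y) with hR | hR
    · obtain ⟨hg0, hd, huniq⟩ := dnp_masterA0 x y t ht hR.symm
      exact ⟨((x,y,0) : Hpt n), ⟨rfl, by rw [hg0, hd]⟩, fun ξ' ⟨h0, he⟩ => huniq ξ' h0 he⟩
    · obtain ⟨l, ⟨hl, hle⟩, _⟩ := dnp_exists_lam (t / dnp_R2f x y) (div_pos ht hR)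
      rw [eq_div_iff (ne_of_gt hR)] at hle
      have ht' : t = l*(l^2+2)*dnp_R2f x y := by linear_combination -hle
      obtain ⟨hg0, hd, huniq⟩ := dnp_masterA x y t l hl hR ht'
      exact ⟨_, ⟨rfl, by rw [hg0, hd]⟩, fun ξ' ⟨h0, he⟩ => huniq ξ' h0 he⟩
  · rintro ⟨x', y', t'⟩ h0 ρ₀ hρ
    change t' = 0 at h0
    subst h0
    rcases eq_or_lt_of_le (dnp_R2f_nonneg x' y') with hR' | hR'
    · -- boundary point at "origin" (dnp_R2f = 0)
      have htp : 0 < ρ₀^2 := by positivity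
      obtain ⟨hg0, hd, huniq⟩ := dnp_masterA0 x' y' (ρ₀^2) htp hR'.symm
      have hq : ((ρ₀^2)^2 : ℝ) = ρ₀^(4:ℕ) := by ring
      have hdρ : distN {η : Hpt n | η.2.2 = 0} ((x',y',ρ₀^2) : Hpt n) = ρ₀ := by
        rw [hd, hq, dnp_pow4_quarter hρ.le]
      refine ⟨((x',y',ρ₀^2) : Hpt n), ⟨htp, by rw [hg0, hd], hdρ⟩, ?_⟩
      rintro ⟨x, y, t⟩ ⟨htpos, hnear, hdval⟩
      change 0 < t at htpos
      rcases eq_or_lt_of_le (dnp_R2f_nonneg x y) with hRxy | hRxy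
      · obtain ⟨hg0', hd', huniq'⟩ := dnp_masterA0 x y t htpos hRxy.symm
        have heq := huniq' ((x',y',0) : Hpt n) rfl hnear
        rw [Prod.mk.injEq, Prod.mk.injEq] at heq
        obtain ⟨hxe, hye, -⟩ := heq
        rw [hd', ← dnp_pow4_quarter hρ.le] at hdval
        have ht2 : t^2 = ρ₀^(4:ℕ) := dnp_rpow_quarter_inj (by positivity) (by positivity) hdval
        have htv : t = ρ₀^2 := by nlinarith [sq_nonneg (t - ρ₀^2), sq_nonneg (t + ρ₀^2)]
        rw [hxe, hye, htv]
      · obtain ⟨l, ⟨hl, hle⟩, _⟩ := dnp_exists_lam (t / dnp_R2f x y) (div_pos htpos hRxy)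
        rw [eq_div_iff (ne_of_gt hRxy)] at hle
        have ht' : t = l*(l^2+2)*dnp_R2f x y := by linear_combination -hle
        obtain ⟨hg0', hd', huniq'⟩ := dnp_masterA x y t l hl hRxy ht'
        have heq := huniq' ((x',y',0) : Hpt n) rfl hnear
        rw [Prod.mk.injEq, Prod.mk.injEq] at heq
        obtain ⟨hxe, hye, -⟩ := heq
        exfalso
        have : dnp_R2f x' y' = (1+l^2) * dnp_R2f x y := by rw [hxe, hye]; exact dnp_R2rot x y l
        nlinarith [sq_nonneg l]
    · -- boundary point with dnp_R2f > 0
      obtain ⟨μ, ⟨hμ, hμe⟩, hμuniq⟩ := dnp_exists_mu (dnp_R2f x' y') ρ₀ hR' hρ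
      have hone : (0:ℝ) < 1+μ^2 := by positivity
      set xc : Fin n → ℝ := fun i => (x' i - μ*y' i)/(1+μ^2) with hxc
      set yc : Fin n → ℝ := fun i => (y' i + μ*x' i)/(1+μ^2) with hyc
      have hxid : (fun i => xc i + μ * yc i) = x' := by
        funext i; rw [hxc, hyc]; field_simp; ring
      have hyid : (fun i => yc i - μ * xc i) = y' := by
        funext i; rw [hxc, hyc]; field_simp; ring
      have hRc : dnp_R2f x' y' = (1+μ^2) * dnp_R2f xc yc := by
        rw [← hxid, ← hyid]; exact dnp_R2rot xc yc μ
      have hRcpos : 0 < dnp_R2f xc yc := by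
        rcases eq_or_lt_of_le (dnp_R2f_nonneg xc yc) with h | h
        · exfalso; rw [hRc, ← h] at hR'; simp at hR'
        · exact h
      have htc : 0 < μ*(μ^2+2)*dnp_R2f xc yc := by
        apply mul_pos (mul_pos hμ (by positivity)) hRcpos
      obtain ⟨hg0, hd, huniq⟩ := dnp_masterA xc yc (μ*(μ^2+2)*dnp_R2f xc yc) μ hμ hRcpos rfl
      have hval : μ^4*(dnp_R2f xc yc)^2*(1+μ^2) = ρ₀^(4:ℕ) := by
        rw [hRc] at hμe
        have h4 : (1+μ^2) * (μ^4*(dnp_R2f xc yc)^2*(1+μ^2)) = (1+μ^2) * ρ₀^(4:ℕ) := by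
          push_cast
          linear_combination hμe
        exact mul_left_cancel₀ (ne_of_gt hone) h4
      have hdρ : distN {η : Hpt n | η.2.2 = 0} ((xc,yc,μ*(μ^2+2)*dnp_R2f xc yc) : Hpt n) = ρ₀ := by
        rw [hd, hval, dnp_pow4_quarter hρ.le]
      refine ⟨((xc,yc,μ*(μ^2+2)*dnp_R2f xc yc) : Hpt n), ⟨htc, ?_, hdρ⟩, ?_⟩
      · show gaugeN (hmul (hinv ((x',y',0) : Hpt n)) _) = _
        rw [← hxid, ← hyid, hg0, hd]
      · rintro ⟨x, y, t⟩ ⟨htpos, hnear, hdval⟩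
        change 0 < t at htpos
        rcases eq_or_lt_of_le (dnp_R2f_nonneg x y) with hRxy | hRxy
        · exfalso
          obtain ⟨hg0', hd', huniq'⟩ := dnp_masterA0 x y t htpos hRxy.symm
          have heq := huniq' ((x',y',0) : Hpt n) rfl hnear
          rw [Prod.mk.injEq, Prod.mk.injEq] at heq
          obtain ⟨hxe, hye, -⟩ := heq
          rw [hxe, hye] at hR'
          rw [← hRxy] at hR'
          exact lt_irrefl _ hR'
        · obtain ⟨l, ⟨hl, hle⟩, _⟩ := dnp_exists_lam (t / dnp_R2f x y) (div_pos htpos hRxy)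
          rw [eq_div_iff (ne_of_gt hRxy)] at hle
          have ht' : t = l*(l^2+2)*dnp_R2f x y := by linear_combination -hle
          obtain ⟨hg0', hd', huniq'⟩ := dnp_masterA x y t l hl hRxy ht'
          have heq := huniq' ((x',y',0) : Hpt n) rfl hnear
          rw [Prod.mk.injEq, Prod.mk.injEq] at heq
          obtain ⟨hxe, hye, -⟩ := heq
          rw [hd', ← dnp_pow4_quarter hρ.le] at hdval
          have hbv : l^4*(dnp_R2f x y)^2*(1+l^2) = ρ₀^(4:ℕ) :=
            dnp_rpow_quarter_inj (by positivity) (by positivity) hdval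
          have hR'rot : dnp_R2f x' y' = (1+l^2) * dnp_R2f x y := by
            rw [hxe, hye]; exact dnp_R2rot x y l
          have hleq : l^4*(dnp_R2f x' y')^2 = ρ₀^4*(1+l^2) := by
            rw [hR'rot]; push_cast at hbv; linear_combination (1+l^2)*hbv
          have hlμ : l = μ := hμuniq l ⟨hl, hleq⟩
          subst hlμ
          have hxe' : ∀ i, x' i = x i + l*y i := fun i => congrFun hxe i
          have hye' : ∀ i, y' i = y i - l*x i := fun i => congrFun hye i
          have ex : x = xc := by
            funext i
            rw [hxc]
            show x i = (x' i - l*y' i)/(1+l^2)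
            rw [hxe' i, hye' i]; field_simp; ring
          have ey : y = yc := by
            funext i
            rw [hyc]
            show y i = (y' i + l*x' i)/(1+l^2)
            rw [hxe' i, hye' i]; field_simp; ring
          have et : t = l*(l^2+2)*dnp_R2f xc yc := by rw [← ex, ← ey]; exact ht'
          rw [ex, ey, et]
end
end

section
/- Let Π₀ = {(x,y,t) ∈ ℍⁿ : t > 0} and let d_ρ(ξ) = inf{ ρ(ξ'⁻¹ξ) : ξ' ∈ ∂Π₀ } denote the Carnot–Carathéodory distance of ξ ∈ Π₀ to ∂Π₀. Then for ξ = (x,y,t) ∈ Π₀ with r = √(|x|²+|y|²): if r ≠ 0, then d_ρ(ξ) = (φ/cos φ)·r, where φ ∈ (0, π/2) is the unique solution of (2φ + sin(2φ))/(2cos²φ) = t/r², and moreover the infimum is attained at a unique boundary point; if r = 0, then d_ρ(ξ) = √(πt/2), and the infimum is attained exactly at the points (x',y',0) with |x'|²+|y'|² = 2t/π. -/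
open MeasureTheory Real Set Filter

noncomputable section

namespace HeisProof

noncomputable def nu (ψ : ℝ) : ℝ := ψ / Real.sin ψ
noncomputable def mu (ψ : ℝ) : ℝ := (ψ - Real.sin ψ * Real.cos ψ) / Real.sin ψ ^ 2

lemma sin_pos' {ψ : ℝ} (h : ψ ∈ Ioo 0 π) : 0 < Real.sin ψ :=
  Real.sin_pos_of_pos_of_lt_pi h.1 h.2

lemma num_pos {ψ : ℝ} (h : ψ ∈ Ioo 0 π) : 0 < ψ - Real.sin ψ * Real.cos ψ := by
  have h1 : Real.sin ψ * Real.cos ψ ≤ Real.sin ψ * 1 :=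
    mul_le_mul_of_nonneg_left (Real.cos_le_one ψ) (sin_pos' h).le
  have h2 : Real.sin ψ < ψ := Real.sin_lt h.1
  nlinarith

lemma mu_pos {ψ : ℝ} (h : ψ ∈ Ioo 0 π) : 0 < mu ψ :=
  div_pos (num_pos h) (pow_pos (sin_pos' h) 2)

lemma nu_pos {ψ : ℝ} (h : ψ ∈ Ioo 0 π) : 0 < nu ψ := div_pos h.1 (sin_pos' h)

/-- sin ψ - ψ cos ψ > 0 on (0, π). -/
lemma nuderiv_num_pos {ψ : ℝ} (h : ψ ∈ Ioo 0 π) : 0 < Real.sin ψ - ψ * Real.cos ψ := by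
  have key : StrictMonoOn (fun x : ℝ => Real.sin x - x * Real.cos x) (Icc 0 π) := by
    apply strictMonoOn_of_deriv_pos (convex_Icc 0 π)
    · fun_prop
    · intro x hx
      rw [interior_Icc] at hx
      have hd : HasDerivAt (fun x : ℝ => Real.sin x - x * Real.cos x)
          (Real.cos x - (1 * Real.cos x + x * (-Real.sin x))) x :=
        (Real.hasDerivAt_sin x).sub ((hasDerivAt_id x).mul (Real.hasDerivAt_cos x))
      rw [hd.deriv]
      have := Real.sin_pos_of_pos_of_lt_pi hx.1 hx.2
      nlinarith [mul_pos hx.1 this]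
  have := key (left_mem_Icc.2 (le_of_lt Real.pi_pos)) ⟨h.1.le, h.2.le⟩ h.1
  simpa using this

lemma hasDerivAt_nu {ψ : ℝ} (h : Real.sin ψ ≠ 0) :
    HasDerivAt nu ((Real.sin ψ - ψ * Real.cos ψ) / Real.sin ψ ^ 2) ψ := by
  have := (hasDerivAt_id ψ).div (Real.hasDerivAt_sin ψ) h
  exact this.congr_deriv (by simp)

lemma hasDerivAt_mu {ψ : ℝ} (h : Real.sin ψ ≠ 0) :
    HasDerivAt mu (2 * (Real.sin ψ - ψ * Real.cos ψ) / Real.sin ψ ^ 3) ψ := by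
  have hnum : HasDerivAt (fun x : ℝ => x - Real.sin x * Real.cos x)
      (1 - (Real.cos ψ * Real.cos ψ + Real.sin ψ * (-Real.sin ψ))) ψ :=
    (hasDerivAt_id ψ).sub ((Real.hasDerivAt_sin ψ).mul (Real.hasDerivAt_cos ψ))
  have hden : HasDerivAt (fun x : ℝ => Real.sin x ^ 2)
      (2 * Real.sin ψ ^ 1 * Real.cos ψ) ψ := by
    exact ((Real.hasDerivAt_sin ψ).pow 2).congr_deriv (by simp)
  have hden' : Real.sin ψ ^ 2 ≠ 0 := pow_ne_zero _ h
  have := hnum.div hden hden'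
  refine this.congr_deriv (Eq.symm ?_)
  have hpyth := Real.sin_sq_add_cos_sq ψ
  field_simp
  linear_combination (-Real.sin ψ) * hpyth

noncomputable def gf (t M r ψ : ℝ) : ℝ := t * nu ψ - M * r - M ^ 2 / Real.sin ψ
noncomputable def Fn (t M r ψ : ℝ) : ℝ := t * nu ψ ^ 2 - 2 * M * r * nu ψ - M ^ 2 * mu ψ

lemma hasDerivAt_gf {t M r ψ : ℝ} (h : Real.sin ψ ≠ 0) :
    HasDerivAt (gf t M r)
      ((t * (Real.sin ψ - ψ * Real.cos ψ) + M ^ 2 * Real.cos ψ) / Real.sin ψ ^ 2) ψ := by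
  have h1 : HasDerivAt (fun x : ℝ => t * nu x)
      (t * ((Real.sin ψ - ψ * Real.cos ψ) / Real.sin ψ ^ 2)) ψ := (hasDerivAt_nu h).const_mul t
  have h2 : HasDerivAt (fun x : ℝ => M ^ 2 / Real.sin x)
      ((0 * Real.sin ψ - M ^ 2 * Real.cos ψ) / Real.sin ψ ^ 2) ψ :=
    (hasDerivAt_const ψ (M ^ 2)).div (Real.hasDerivAt_sin ψ) h
  have := (h1.sub_const (M * r)).sub h2
  refine this.congr_deriv (Eq.symm ?_)
  field_simp
  ring

lemma gf_deriv_pos {t M ψ : ℝ} (ht : 0 < t) (hM2 : M ^ 2 ≤ t * (π / 2)) (hψ : ψ ∈ Ioo 0 π) :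
    0 < (t * (Real.sin ψ - ψ * Real.cos ψ) + M ^ 2 * Real.cos ψ) / Real.sin ψ ^ 2 := by
  have hs := sin_pos' hψ
  have hnum := nuderiv_num_pos hψ
  apply div_pos _ (by positivity)
  rcases le_or_gt 0 (Real.cos ψ) with hc | hc
  · nlinarith [sq_nonneg M]
  · have hhalf : π / 2 < ψ := by
      by_contra hle
      push_neg at hle
      exact absurd (Real.cos_nonneg_of_mem_Icc ⟨by linarith [hψ.1, Real.pi_pos], hle⟩)
        (not_le.2 hc)
    nlinarith [mul_pos (mul_pos ht (show (0:ℝ) < ψ - π/2 by linarith)) (neg_pos.2 hc)]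

lemma gf_strictMonoOn {t M r : ℝ} (ht : 0 < t) (hM2 : M ^ 2 ≤ t * (π / 2)) :
    StrictMonoOn (gf t M r) (Ioo 0 π) := by
  apply strictMonoOn_of_deriv_pos (convex_Ioo 0 π)
  · exact fun x hx => (hasDerivAt_gf (ne_of_gt (sin_pos' hx))).continuousAt.continuousWithinAt
  · intro x hx
    rw [interior_Ioo] at hx
    rw [(hasDerivAt_gf (ne_of_gt (sin_pos' hx))).deriv]
    exact gf_deriv_pos ht hM2 hx

lemma hasDerivAt_Fn {t M r ψ : ℝ} (h : Real.sin ψ ≠ 0) :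
    HasDerivAt (Fn t M r)
      (2 * ((Real.sin ψ - ψ * Real.cos ψ) / Real.sin ψ ^ 2) * gf t M r ψ) ψ := by
  have h1 : HasDerivAt (fun x : ℝ => t * nu x ^ 2)
      (t * (2 * nu ψ ^ 1 * ((Real.sin ψ - ψ * Real.cos ψ) / Real.sin ψ ^ 2))) ψ :=
    ((hasDerivAt_nu h).pow 2).const_mul t
  have h2 : HasDerivAt (fun x : ℝ => 2 * M * r * nu x)
      (2 * M * r * ((Real.sin ψ - ψ * Real.cos ψ) / Real.sin ψ ^ 2)) ψ :=
    (hasDerivAt_nu h).const_mul (2 * M * r)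
  have h3 : HasDerivAt (fun x : ℝ => M ^ 2 * mu x)
      (M ^ 2 * (2 * (Real.sin ψ - ψ * Real.cos ψ) / Real.sin ψ ^ 3)) ψ :=
    (hasDerivAt_mu h).const_mul (M ^ 2)
  have := (h1.sub h2).sub h3
  refine this.congr_deriv (Eq.symm ?_)
  unfold gf nu
  field_simp

lemma Fn_nonneg {t M r θ : ℝ} (ht : 0 < t) (hM2 : M ^ 2 ≤ t * (π / 2))
    (hθ : θ ∈ Ioo 0 π) (hgθ : gf t M r θ = 0) (hFθ : Fn t M r θ = 0) :
    ∀ ψ ∈ Ioo 0 π, 0 ≤ Fn t M r ψ ∧ (Fn t M r ψ = 0 → ψ = θ) := by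
  have hmono := gf_strictMonoOn (t := t) (M := M) (r := r) ht hM2
  have contF : ∀ s : Set ℝ, s ⊆ Ioo 0 π → ContinuousOn (Fn t M r) s := fun s hs x hx =>
    (hasDerivAt_Fn (ne_of_gt (sin_pos' (hs hx)))).continuousAt.continuousWithinAt
  have hθπ : θ < π := hθ.2
  have hsub1 : Ioc 0 θ ⊆ Ioo 0 π := fun x hx => ⟨hx.1, lt_of_le_of_lt hx.2 hθπ⟩
  have hsub2 : Ico θ π ⊆ Ioo 0 π := fun x hx => ⟨lt_of_lt_of_le hθ.1 hx.1, hx.2⟩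
  have hanti : StrictAntiOn (Fn t M r) (Ioc 0 θ) := by
    apply strictAntiOn_of_deriv_neg (convex_Ioc 0 θ) (contF _ hsub1)
    intro x hx
    rw [interior_Ioc] at hx
    have hx' : x ∈ Ioo 0 π := ⟨hx.1, lt_trans hx.2 hθπ⟩
    rw [(hasDerivAt_Fn (ne_of_gt (sin_pos' hx'))).deriv]
    have hg : gf t M r x < 0 := by
      have := hmono hx' hθ hx.2
      linarith [hgθ ▸ this]
    have hnu' : 0 < (Real.sin x - x * Real.cos x) / Real.sin x ^ 2 :=
      div_pos (nuderiv_num_pos hx') (pow_pos (sin_pos' hx') 2)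
    nlinarith
  have hmono2 : StrictMonoOn (Fn t M r) (Ico θ π) := by
    apply strictMonoOn_of_deriv_pos (convex_Ico θ π) (contF _ hsub2)
    intro x hx
    rw [interior_Ico] at hx
    have hx' : x ∈ Ioo 0 π := ⟨lt_trans hθ.1 hx.1, hx.2⟩
    rw [(hasDerivAt_Fn (ne_of_gt (sin_pos' hx'))).deriv]
    have hg : 0 < gf t M r x := by
      have := hmono hθ hx' hx.1
      linarith [hgθ ▸ this]
    have hnu' : 0 < (Real.sin x - x * Real.cos x) / Real.sin x ^ 2 :=
      div_pos (nuderiv_num_pos hx') (pow_pos (sin_pos' hx') 2)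
    nlinarith
  intro ψ hψ
  rcases lt_trichotomy ψ θ with hlt | heq | hgt
  · have := hanti ⟨hψ.1, hlt.le⟩ ⟨hθ.1, le_refl θ⟩ hlt
    constructor
    · linarith [hFθ ▸ this]
    · intro h0; exfalso; rw [hFθ, h0] at this; exact lt_irrefl 0 this
  · exact ⟨heq ▸ le_of_eq hFθ.symm, fun _ => heq⟩
  · have := hmono2 ⟨le_refl θ, hθπ⟩ ⟨hgt.le, hψ.2⟩ hgt
    constructor
    · linarith [hFθ ▸ this]
    · intro h0; exfalso; rw [hFθ, h0] at this; exact lt_irrefl 0 this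

lemma key_ineq {t M r θ : ℝ} (ht : 0 < t) (hM : 0 < M) (hr : 0 ≤ r)
    (hM2 : M ^ 2 ≤ t * (π / 2)) (hθ : θ ∈ Ioo 0 π)
    (hgθ : gf t M r θ = 0) (hFθ : Fn t M r θ = 0)
    {ψ c : ℝ} (hψ : ψ ∈ Ioo 0 π) (hc : 0 < c) (hcon : t - 2 * c * r ≤ c ^ 2 * mu ψ) :
    M ≤ nu ψ * c ∧ (nu ψ * c = M → ψ = θ ∧ c ^ 2 * mu ψ = t - 2 * c * r) := by
  obtain ⟨hF0, hFeq⟩ := Fn_nonneg ht hM2 hθ hgθ hFθ ψ hψ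
  have hs := nu_pos hψ
  have hm := mu_pos hψ
  have hFn : 0 ≤ t * nu ψ ^ 2 - 2 * M * r * nu ψ - M ^ 2 * mu ψ := hF0
  have hfac : 0 < mu ψ * (nu ψ * c + M) + 2 * nu ψ * r := by positivity
  have hprod : 0 ≤ (nu ψ * c - M) * (mu ψ * (nu ψ * c + M) + 2 * nu ψ * r) := by
    nlinarith [mul_le_mul_of_nonneg_left hcon (sq_nonneg (nu ψ))]
  have hge : M ≤ nu ψ * c := by
    by_contra hlt
    push_neg at hlt
    nlinarith
  refine ⟨hge, fun heq => ?_⟩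
  have hsq : nu ψ ^ 2 * c ^ 2 = M ^ 2 := by rw [← heq]; ring
  have hsqm : nu ψ ^ 2 * c ^ 2 * mu ψ = M ^ 2 * mu ψ := by rw [← heq]; ring
  have hMr : M * r * nu ψ = nu ψ ^ 2 * c * r := by rw [← heq]; ring
  have e1 : M ^ 2 * mu ψ = nu ψ ^ 2 * t - 2 * nu ψ ^ 2 * c * r := by
    have ha : M ^ 2 * mu ψ ≥ nu ψ ^ 2 * t - 2 * nu ψ ^ 2 * c * r := by
      nlinarith [mul_le_mul_of_nonneg_left hcon (sq_nonneg (nu ψ)), hsqm]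
    have hb : nu ψ ^ 2 * t - 2 * nu ψ ^ 2 * c * r ≥ M ^ 2 * mu ψ := by
      nlinarith [hFn, hMr]
    linarith
  have hF0' : Fn t M r ψ = 0 := by
    unfold Fn
    linear_combination (-1) * e1 - 2 * hMr
  refine ⟨hFeq hF0', ?_⟩
  have hs2 : nu ψ ^ 2 ≠ 0 := by positivity
  have hz : nu ψ ^ 2 * (c ^ 2 * mu ψ - (t - 2 * c * r)) = 0 := by
    linear_combination e1 + mu ψ * hsq
  rcases mul_eq_zero.1 hz with h | h
  · exact absurd h hs2
  · linarith

noncomputable def Gf (φ : ℝ) : ℝ := (φ + Real.sin φ * Real.cos φ) / Real.cos φ ^ 2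

lemma cube_bound {x : ℝ} (h0 : 0 ≤ x) (h1 : x ≤ 1) :
    x - Real.sin x * Real.cos x ≤ x ^ 3 := by
  have key : MonotoneOn (fun x : ℝ => x ^ 3 - (x - Real.sin x * Real.cos x)) (Icc 0 1) := by
    apply monotoneOn_of_deriv_nonneg (convex_Icc 0 1)
    · fun_prop
    · fun_prop
    · intro x hx
      rw [interior_Icc] at hx
      have hd : HasDerivAt (fun x : ℝ => x ^ 3 - (x - Real.sin x * Real.cos x))
          (3 * x ^ 2 - (1 - (Real.cos x * Real.cos x + Real.sin x * (-Real.sin x)))) x := by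
        have := ((hasDerivAt_pow 3 x).sub ((hasDerivAt_id x).sub
          ((Real.hasDerivAt_sin x).mul (Real.hasDerivAt_cos x))))
        exact this.congr_deriv (by simp)
      rw [hd.deriv]
      have hsle : Real.sin x ≤ x := Real.sin_le hx.1.le
      have hsnn : 0 ≤ Real.sin x := Real.sin_nonneg_of_nonneg_of_le_pi hx.1.le
        (by linarith [Real.pi_gt_three, hx.2])
      have hpyth := Real.sin_sq_add_cos_sq x
      nlinarith
  have := key (left_mem_Icc.2 zero_le_one) ⟨h0, h1⟩ h0
  simp at this
  nlinarith [this]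

lemma mu_le {ψ : ℝ} (h1 : 0 < ψ) (h2 : ψ ≤ 1) : mu ψ ≤ 2 * ψ := by
  have hsin : 3 / 4 * ψ ≤ Real.sin ψ := by
    have h3 := Real.sin_gt_sub_cube h1
    have hψ2 : ψ ^ 2 ≤ 1 := by nlinarith
    nlinarith [mul_le_mul_of_nonneg_left hψ2 h1.le]
  have hspos : 0 < Real.sin ψ := by nlinarith
  have hcube := cube_bound h1.le h2
  rw [mu, div_le_iff₀ (by positivity)]
  nlinarith [mul_le_mul_of_nonneg_left (mul_le_mul hsin hsin (by positivity) hspos.le)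
    (by positivity : (0:ℝ) ≤ 2 * ψ)]

lemma mu_ge {ψ : ℝ} (h1 : 3 ≤ ψ) (h2 : ψ < π) : 2 / (π - ψ) ^ 2 ≤ mu ψ := by
  have hψ0 : (0:ℝ) < ψ := by linarith
  have hs := sin_pos' ⟨hψ0, h2⟩
  have hnum : 2 ≤ ψ - Real.sin ψ * Real.cos ψ := by
    have h1' : Real.sin ψ * Real.cos ψ ≤ 1 :=
      le_trans (mul_le_of_le_one_right hs.le (Real.cos_le_one ψ)) (Real.sin_le_one ψ)
    linarith
  have hsle : Real.sin ψ ≤ π - ψ := by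
    have := Real.sin_le (by linarith : (0:ℝ) ≤ π - ψ)
    rwa [Real.sin_pi_sub] at this
  have hd : Real.sin ψ ^ 2 ≤ (π - ψ) ^ 2 := by nlinarith
  have hd0 : (0:ℝ) < (π - ψ) ^ 2 := by nlinarith
  calc 2 / (π - ψ) ^ 2 ≤ 2 / Real.sin ψ ^ 2 := by
        apply div_le_div_of_nonneg_left (by norm_num) (by positivity) hd
    _ ≤ (ψ - Real.sin ψ * Real.cos ψ) / Real.sin ψ ^ 2 := by
        apply div_le_div_of_nonneg_right ?_ (by positivity)
        · linarith
    _ = mu ψ := rfl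

lemma mu_continuousOn {s : Set ℝ} (hs : s ⊆ Ioo 0 π) : ContinuousOn mu s := by
  intro x hx
  have hne : Real.sin x ≠ 0 := ne_of_gt (sin_pos' (hs hx))
  have h1 : ContinuousAt (fun y : ℝ => y - Real.sin y * Real.cos y) x := by fun_prop
  have h2 : ContinuousAt (fun y : ℝ => Real.sin y ^ 2) x :=
    (Real.continuous_sin.pow 2).continuousAt
  exact (h1.div h2 (pow_ne_zero 2 hne)).continuousWithinAt

lemma mu_surj {T : ℝ} (hT : 0 < T) : ∃ ψ ∈ Ioo 0 π, mu ψ = T := by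
  set a := min (1/2 : ℝ) (T/4) with ha_def
  have ha0 : 0 < a := lt_min (by norm_num) (by linarith)
  have ha1 : a ≤ 1 := le_trans (min_le_left _ _) (by norm_num)
  have hmua : mu a ≤ T := by
    have := mu_le ha0 ha1
    have : mu a ≤ 2 * (T/4) := le_trans this (by
      have := min_le_right (1/2 : ℝ) (T/4); linarith)
    linarith
  set e := min (1/10 : ℝ) (Real.sqrt (1/T)) with he_def
  have he0 : 0 < e := lt_min (by norm_num) (Real.sqrt_pos.2 (by positivity))
  set b := π - e with hb_def
  have hb3 : 3 ≤ b := by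
    have : e ≤ 1/10 := min_le_left _ _
    have := Real.pi_gt_d6
    simp only [hb_def]; linarith
  have hbπ : b < π := by simp only [hb_def]; linarith
  have hmub : T ≤ mu b := by
    have h1 : 2 / (π - b) ^ 2 ≤ mu b := mu_ge hb3 hbπ
    have h2 : e ^ 2 ≤ 1 / T := by
      have : e ≤ Real.sqrt (1/T) := min_le_right _ _
      nlinarith [Real.sq_sqrt (le_of_lt (show (0:ℝ) < 1/T by positivity)),
        Real.sqrt_nonneg (1/T)]
    have h3 : (π - b) ^ 2 = e ^ 2 := by simp only [hb_def]; ring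
    have h4 : T ≤ 2 / e ^ 2 := by
      rw [le_div_iff₀ (by positivity)]
      calc T * e ^ 2 ≤ T * (1/T) := by
            apply mul_le_mul_of_nonneg_left h2 hT.le
        _ = 1 := by field_simp
        _ ≤ 2 := by norm_num
    calc T ≤ 2 / e ^ 2 := h4
      _ = 2 / (π - b) ^ 2 := by rw [h3]
      _ ≤ mu b := h1
  have hab : a ≤ b := by
    have : a ≤ 1/2 := min_le_left _ _
    linarith
  have hsub : Icc a b ⊆ Ioo 0 π := fun x hx => ⟨lt_of_lt_of_le ha0 hx.1, lt_of_le_of_lt hx.2 hbπ⟩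
  have := intermediate_value_Icc hab (mu_continuousOn hsub)
  obtain ⟨ψ, hψmem, hψval⟩ := this ⟨hmua, hmub⟩
  exact ⟨ψ, hsub hψmem, hψval⟩

lemma cos_pos' {φ : ℝ} (h : φ ∈ Ioo 0 (π/2)) : 0 < Real.cos φ :=
  Real.cos_pos_of_mem_Ioo ⟨by linarith [h.1, Real.pi_pos], h.2⟩

lemma sin_pos'' {φ : ℝ} (h : φ ∈ Ioo 0 (π/2)) : 0 < Real.sin φ :=
  Real.sin_pos_of_pos_of_lt_pi h.1 (by linarith [h.2, Real.pi_pos])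

lemma hasDerivAt_Gf {φ : ℝ} (h : Real.cos φ ≠ 0) :
    HasDerivAt Gf ((2 * Real.cos φ ^ 4 + 2 * Real.sin φ * Real.cos φ *
      (φ + Real.sin φ * Real.cos φ)) / Real.cos φ ^ 4) φ := by
  have hnum : HasDerivAt (fun x : ℝ => x + Real.sin x * Real.cos x)
      (1 + (Real.cos φ * Real.cos φ + Real.sin φ * (-Real.sin φ))) φ :=
    (hasDerivAt_id φ).add ((Real.hasDerivAt_sin φ).mul (Real.hasDerivAt_cos φ))
  have hden : HasDerivAt (fun x : ℝ => Real.cos x ^ 2)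
      (2 * Real.cos φ ^ 1 * (-Real.sin φ)) φ := by
    exact ((Real.hasDerivAt_cos φ).pow 2).congr_deriv (by simp)
  have := hnum.div hden (pow_ne_zero 2 h)
  refine this.congr_deriv (Eq.symm ?_)
  have hpyth := Real.sin_sq_add_cos_sq φ
  field_simp
  linear_combination (Real.cos φ) * hpyth

lemma Gf_strictMonoOn : StrictMonoOn Gf (Ioo 0 (π/2)) := by
  apply strictMonoOn_of_deriv_pos (convex_Ioo 0 (π/2))
  · exact fun x hx => (hasDerivAt_Gf (ne_of_gt (cos_pos' hx))).continuousAt.continuousWithinAt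
  · intro x hx
    rw [interior_Ioo] at hx
    rw [(hasDerivAt_Gf (ne_of_gt (cos_pos' hx))).deriv]
    have hc := cos_pos' hx
    have hs := sin_pos'' hx
    have hnum : 0 < x + Real.sin x * Real.cos x := by nlinarith [mul_pos hs hc, hx.1]
    have h4 : 0 < Real.cos x ^ 4 := pow_pos hc 4
    apply div_pos _ h4
    nlinarith [mul_pos (mul_pos hs hc) hnum]

lemma Gf_le {φ : ℝ} (h1 : 0 < φ) (h2 : φ ≤ 1/2) : Gf φ ≤ 8 * φ := by
  have hφπ : φ ∈ Ioo 0 (π/2) := ⟨h1, by linarith [Real.pi_gt_three]⟩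
  have hc := cos_pos' hφπ
  have hs := sin_pos'' hφπ
  have hcge : 1/2 ≤ Real.cos φ := by
    calc (1/2 : ℝ) = Real.cos (π/3) := Real.cos_pi_div_three.symm
      _ ≤ Real.cos φ := by
          apply Real.cos_le_cos_of_nonneg_of_le_pi h1.le (by linarith [Real.pi_gt_three])
          linarith [Real.pi_gt_three]
  have hsle : Real.sin φ ≤ φ := Real.sin_le h1.le
  have hsc : Real.sin φ * Real.cos φ ≤ φ :=
    le_trans (mul_le_of_le_one_right hs.le (Real.cos_le_one φ)) hsle
  rw [Gf, div_le_iff₀ (by positivity)]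
  nlinarith [mul_nonneg h1.le (by nlinarith : (0:ℝ) ≤ 4 * Real.cos φ ^ 2 - 1)]

lemma Gf_ge {φ : ℝ} (h1 : 1 ≤ φ) (h2 : φ < π/2) : 1 / (π/2 - φ) ^ 2 ≤ Gf φ := by
  have hφπ : φ ∈ Ioo 0 (π/2) := ⟨by linarith, h2⟩
  have hc := cos_pos' hφπ
  have hs := sin_pos'' hφπ
  have hnum : 1 ≤ φ + Real.sin φ * Real.cos φ := by nlinarith [mul_pos hs hc]
  have hcle : Real.cos φ ≤ π/2 - φ := by
    have := Real.sin_le (by linarith : (0:ℝ) ≤ π/2 - φ)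
    rwa [Real.sin_pi_div_two_sub] at this
  have hd : Real.cos φ ^ 2 ≤ (π/2 - φ) ^ 2 := by nlinarith
  calc 1 / (π/2 - φ) ^ 2 ≤ 1 / Real.cos φ ^ 2 :=
        div_le_div_of_nonneg_left (by norm_num) (by positivity) hd
    _ ≤ (φ + Real.sin φ * Real.cos φ) / Real.cos φ ^ 2 :=
        div_le_div_of_nonneg_right hnum (by positivity)
    _ = Gf φ := rfl

lemma Gf_continuousOn {s : Set ℝ} (hs : s ⊆ Ioo 0 (π/2)) : ContinuousOn Gf s := by
  intro x hx
  have hne : Real.cos x ≠ 0 := ne_of_gt (cos_pos' (hs hx))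
  have h1 : ContinuousAt (fun y : ℝ => y + Real.sin y * Real.cos y) x := by fun_prop
  have h2 : ContinuousAt (fun y : ℝ => Real.cos y ^ 2) x :=
    (Real.continuous_cos.pow 2).continuousAt
  exact (h1.div h2 (pow_ne_zero 2 hne)).continuousWithinAt

lemma Gf_surj {T : ℝ} (hT : 0 < T) : ∃ φ ∈ Ioo 0 (π/2), Gf φ = T := by
  set a := min (1/2 : ℝ) (T/16) with ha_def
  have ha0 : 0 < a := lt_min (by norm_num) (by linarith)
  have ha1 : a ≤ 1/2 := min_le_left _ _
  have hGa : Gf a ≤ T := by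
    have h := Gf_le ha0 ha1
    have : a ≤ T/16 := min_le_right _ _
    linarith
  set e := min (1/4 : ℝ) (Real.sqrt (1/(2*T))) with he_def
  have he0 : 0 < e := lt_min (by norm_num) (Real.sqrt_pos.2 (by positivity))
  set b := π/2 - e with hb_def
  have hb1 : 1 ≤ b := by
    have : e ≤ 1/4 := min_le_left _ _
    have := Real.pi_gt_three
    simp only [hb_def]; linarith
  have hbπ : b < π/2 := by simp only [hb_def]; linarith
  have hGb : T ≤ Gf b := by
    have h1 := Gf_ge hb1 hbπ
    have h2 : e ^ 2 ≤ 1 / (2*T) := by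
      have hmin : e ≤ Real.sqrt (1/(2*T)) := min_le_right _ _
      nlinarith [Real.sq_sqrt (le_of_lt (show (0:ℝ) < 1/(2*T) by positivity)),
        Real.sqrt_nonneg (1/(2*T))]
    have h3 : (π/2 - b) ^ 2 = e ^ 2 := by simp only [hb_def]; ring
    have h4 : T ≤ 1 / e ^ 2 := by
      rw [le_div_iff₀ (by positivity)]
      calc T * e ^ 2 ≤ T * (1/(2*T)) := mul_le_mul_of_nonneg_left h2 hT.le
        _ = 1/2 := by field_simp
        _ ≤ 1 := by norm_num
    calc T ≤ 1 / e ^ 2 := h4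
      _ = 1 / (π/2 - b) ^ 2 := by rw [h3]
      _ ≤ Gf b := h1
  have hab : a ≤ b := by linarith
  have hsub : Icc a b ⊆ Ioo 0 (π/2) := fun x hx =>
    ⟨lt_of_lt_of_le ha0 hx.1, lt_of_le_of_lt hx.2 hbπ⟩
  obtain ⟨φ, hφmem, hφval⟩ := intermediate_value_Icc hab (Gf_continuousOn hsub) ⟨hGa, hGb⟩
  exact ⟨φ, hsub hφmem, hφval⟩

/-- Parameter identities for the case r > 0. -/
lemma params_r_pos {θ r : ℝ} (hθ : θ ∈ Ioo 0 (π/2)) (hr : 0 < r) :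
    gf (Gf θ * r ^ 2) (θ / Real.cos θ * r) r θ = 0 ∧
    Fn (Gf θ * r ^ 2) (θ / Real.cos θ * r) r θ = 0 ∧
    (θ / Real.cos θ * r) ^ 2 ≤ (Gf θ * r ^ 2) * (π / 2) ∧
    0 < Gf θ * r ^ 2 ∧ 0 < θ / Real.cos θ * r := by
  have hc := cos_pos' hθ
  have hs := sin_pos'' hθ
  have hsc := mul_pos hs hc
  refine ⟨?_, ?_, ?_, ?_, ?_⟩
  · unfold gf nu Gf
    field_simp
    ring
  · unfold Fn nu mu Gf
    field_simp
    ring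
  · have key : θ ^ 2 ≤ (π/2) * (θ + Real.sin θ * Real.cos θ) := by nlinarith [hθ.2, hθ.1]
    unfold Gf
    have h2 : θ ^ 2 * r ^ 2 ≤ ((π/2) * (θ + Real.sin θ * Real.cos θ)) * r ^ 2 :=
      mul_le_mul_of_nonneg_right key (sq_nonneg r)
    calc (θ / Real.cos θ * r) ^ 2 = θ ^ 2 * r ^ 2 / Real.cos θ ^ 2 := by
          rw [mul_pow, div_pow]; ring
      _ ≤ ((π/2) * (θ + Real.sin θ * Real.cos θ)) * r ^ 2 / Real.cos θ ^ 2 :=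
          div_le_div_of_nonneg_right h2 (pow_pos hc 2).le
      _ = (θ + Real.sin θ * Real.cos θ) / Real.cos θ ^ 2 * r ^ 2 * (π / 2) := by ring
  · exact mul_pos (div_pos (by nlinarith [hθ.1, hsc] : 0 < θ + Real.sin θ * Real.cos θ)
      (pow_pos hc 2)) (pow_pos hr 2)
  · exact mul_pos (div_pos hθ.1 hc) hr

/-- Parameter identities for the case r = 0. -/
lemma params_r_zero {t : ℝ} (ht : 0 < t) :
    gf t (Real.sqrt (π * t / 2)) 0 (π/2) = 0 ∧
    Fn t (Real.sqrt (π * t / 2)) 0 (π/2) = 0 ∧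
    (Real.sqrt (π * t / 2)) ^ 2 ≤ t * (π / 2) ∧
    0 < Real.sqrt (π * t / 2) := by
  have hπ := Real.pi_pos
  have hM2 : (Real.sqrt (π * t / 2)) ^ 2 = π * t / 2 := Real.sq_sqrt (by positivity)
  have hsin : Real.sin (π/2) = 1 := Real.sin_pi_div_two
  have hcos : Real.cos (π/2) = 0 := Real.cos_pi_div_two
  refine ⟨?_, ?_, ?_, ?_⟩
  · unfold gf nu; rw [hsin, hM2]; ring
  · unfold Fn nu mu; rw [hsin, hcos, hM2]; ring
  · rw [hM2]; linarith
  · exact Real.sqrt_pos.2 (by positivity)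

variable {ι : Type*} [Fintype ι]

lemma cs_le (p q : ι → ℝ) :
    |∑ j, p j * q j| ≤ Real.sqrt (∑ j, p j ^ 2) * Real.sqrt (∑ j, q j ^ 2) := by
  have h := Finset.sum_mul_sq_le_sq_mul_sq Finset.univ p q
  have hA : (0:ℝ) ≤ ∑ j, p j ^ 2 := Finset.sum_nonneg fun j _ => sq_nonneg _
  have hB : (0:ℝ) ≤ ∑ j, q j ^ 2 := Finset.sum_nonneg fun j _ => sq_nonneg _
  calc |∑ j, p j * q j| = Real.sqrt ((∑ j, p j * q j) ^ 2) := (Real.sqrt_sq_eq_abs _).symm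
    _ ≤ Real.sqrt ((∑ j, p j ^ 2) * ∑ j, q j ^ 2) := Real.sqrt_le_sqrt h
    _ = Real.sqrt (∑ j, p j ^ 2) * Real.sqrt (∑ j, q j ^ 2) := Real.sqrt_mul hA _

lemma cs_eq (p q : ι → ℝ)
    (h : ∑ j, p j * q j = -(Real.sqrt (∑ j, p j ^ 2) * Real.sqrt (∑ j, q j ^ 2))) :
    ∀ j, Real.sqrt (∑ j, q j ^ 2) * p j = -(Real.sqrt (∑ j, p j ^ 2) * q j) := by
  set A := ∑ j, p j ^ 2 with hA_def
  set B := ∑ j, q j ^ 2 with hB_def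
  have hA : (0:ℝ) ≤ A := Finset.sum_nonneg fun j _ => sq_nonneg _
  have hB : (0:ℝ) ≤ B := Finset.sum_nonneg fun j _ => sq_nonneg _
  have hsA : Real.sqrt A ^ 2 = A := Real.sq_sqrt hA
  have hsB : Real.sqrt B ^ 2 = B := Real.sq_sqrt hB
  have key : ∑ j, (Real.sqrt B * p j + Real.sqrt A * q j) ^ 2 = 0 := by
    have expand : ∀ j : ι, (Real.sqrt B * p j + Real.sqrt A * q j) ^ 2
        = Real.sqrt B ^ 2 * p j ^ 2 + Real.sqrt A ^ 2 * q j ^ 2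
          + 2 * Real.sqrt A * Real.sqrt B * (p j * q j) := fun j => by ring
    calc ∑ j, (Real.sqrt B * p j + Real.sqrt A * q j) ^ 2
        = ∑ j, (Real.sqrt B ^ 2 * p j ^ 2 + Real.sqrt A ^ 2 * q j ^ 2
          + 2 * Real.sqrt A * Real.sqrt B * (p j * q j)) :=
          Finset.sum_congr rfl fun j _ => expand j
      _ = Real.sqrt B ^ 2 * A + Real.sqrt A ^ 2 * B
          + 2 * Real.sqrt A * Real.sqrt B * (∑ j, p j * q j) := by
          rw [Finset.sum_add_distrib, Finset.sum_add_distrib, ← Finset.mul_sum,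
            ← Finset.mul_sum, ← Finset.mul_sum]
      _ = 0 := by rw [h]; nlinarith [hsA, hsB]
  intro j
  have h0 : (Real.sqrt B * p j + Real.sqrt A * q j) ^ 2 = 0 :=
    (Finset.sum_eq_zero_iff_of_nonneg (fun j _ => sq_nonneg _)).1 key j (Finset.mem_univ j)
  have := pow_eq_zero_iff (n := 2) (by norm_num) |>.1 h0
  linarith [this]

lemma theta_in_Ioo {θ : ℝ} (hθ : θ ∈ Ioo 0 (π/2)) : θ ∈ Ioo 0 π :=
  ⟨hθ.1, by linarith [hθ.2, Real.pi_pos]⟩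

/-- The main lower bound in the case r > 0, c > 0, S ≠ 0. -/
lemma lower1 {r t θ c S ψ : ℝ} (hr : 0 < r) (hθ : θ ∈ Ioo 0 (π/2))
    (hGf : Gf θ * r ^ 2 = t) (hc : 0 < c) (hψ : ψ ∈ Ioo 0 π)
    (hmu : c ^ 2 * mu ψ = |S|) (hS : |S - t| ≤ 2 * c * r) :
    θ / Real.cos θ * r ≤ nu ψ * c ∧
      (nu ψ * c = θ / Real.cos θ * r →
        ψ = θ ∧ c = Real.sin θ / Real.cos θ * r ∧ S = t - 2 * c * r) := by
  obtain ⟨hg, hF, hM2, ht, hM⟩ := params_r_pos hθ hr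
  rw [hGf] at hg hF hM2 ht
  have hc' : 0 < Real.cos θ := cos_pos' hθ
  have hs' : 0 < Real.sin θ := sin_pos'' hθ
  have hScon : t - 2 * c * r ≤ c ^ 2 * mu ψ := by
    rw [hmu]
    have h1 : S - t ≥ -(2 * c * r) := neg_le_of_abs_le hS
    have h2 : S ≤ |S| := le_abs_self S
    linarith
  obtain ⟨hle, heqc⟩ := key_ineq ht hM hr.le hM2 (theta_in_Ioo hθ) hg hF hψ hc hScon
  refine ⟨hle, fun heq => ?_⟩
  obtain ⟨hψθ, hceq⟩ := heqc heq
  subst hψθ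
  -- c is the positive root of mu ψ * c² + 2 r c - t = 0; so is r tan ψ.
  have hc0 : Real.sin ψ / Real.cos ψ * r > 0 := by positivity
  have hroot : mu ψ * (Real.sin ψ / Real.cos ψ * r) ^ 2
      + 2 * r * (Real.sin ψ / Real.cos ψ * r) - t = 0 := by
    rw [← hGf]
    unfold mu Gf
    field_simp
    ring
  have hroot2 : mu ψ * c ^ 2 + 2 * r * c - t = 0 := by linarith [hceq]
  have hmupos := mu_pos (theta_in_Ioo hθ)
  have hfactor : (c - Real.sin ψ / Real.cos ψ * r)
      * (mu ψ * (c + Real.sin ψ / Real.cos ψ * r) + 2 * r) = 0 := by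
    nlinarith [hroot, hroot2]
  have hfacpos : 0 < mu ψ * (c + Real.sin ψ / Real.cos ψ * r) + 2 * r := by
    have : 0 < c + Real.sin ψ / Real.cos ψ * r := by linarith
    nlinarith
  have hceq2 : c = Real.sin ψ / Real.cos ψ * r := by
    rcases mul_eq_zero.1 hfactor with h | h
    · linarith
    · exfalso; linarith
  refine ⟨rfl, hceq2, ?_⟩
  -- recover S
  have hSpos : 0 < t - 2 * c * r := by
    have h0 : 0 < c ^ 2 * mu ψ := mul_pos (pow_pos hc 2) hmupos
    linarith [hceq]
  have habs : |S| = t - 2 * c * r := by rw [← hmu, hceq]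
  have h1 : S - t ≥ -(2 * c * r) := neg_le_of_abs_le hS
  rcases abs_cases S with ⟨h2, _⟩ | ⟨h2, _⟩
  · linarith [habs, h1]
  · exfalso; rw [h2] at habs; linarith

/-- Lower bound, case r > 0, S = 0 (then the value is c itself). -/
lemma lower2 {r t θ c : ℝ} (hr : 0 < r) (hθ : θ ∈ Ioo 0 (π/2))
    (hGf : Gf θ * r ^ 2 = t) (hc : 0 < c) (h2 : t ≤ 2 * c * r) :
    θ / Real.cos θ * r < c := by
  have hcθ : 0 < Real.cos θ := cos_pos' hθ
  have hsθ : 0 < Real.sin θ := sin_pos'' hθ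
  have hnum := nuderiv_num_pos (theta_in_Ioo hθ)
  -- 2 θ cos θ < θ + sin θ cos θ
  have hkey : 2 * θ * Real.cos θ < θ + Real.sin θ * Real.cos θ := by
    nlinarith [mul_pos hcθ hnum, mul_nonneg hθ.1.le (sq_nonneg (1 - Real.cos θ))]
  -- M * (2r) < t
  have hM' : θ / Real.cos θ * r * (2 * r) < t := by
    rw [← hGf]
    have h3 := mul_lt_mul_of_pos_right hkey
      (show 0 < r ^ 2 / Real.cos θ ^ 2 by positivity)
    calc θ / Real.cos θ * r * (2 * r) = (2 * θ * Real.cos θ) * (r ^ 2 / Real.cos θ ^ 2) := by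
          field_simp
      _ < (θ + Real.sin θ * Real.cos θ) * (r ^ 2 / Real.cos θ ^ 2) := h3
      _ = Gf θ * r ^ 2 := by unfold Gf; ring
  nlinarith

/-- Lower bound, case r > 0, c = 0 (value is √(π t)). -/
lemma lower3 {r t θ : ℝ} (hr : 0 < r) (hθ : θ ∈ Ioo 0 (π/2))
    (hGf : Gf θ * r ^ 2 = t) :
    θ / Real.cos θ * r < Real.sqrt (π * t) := by
  have hcθ : 0 < Real.cos θ := cos_pos' hθ
  have hsθ : 0 < Real.sin θ := sin_pos'' hθ
  have ht : 0 < t := by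
    rw [← hGf]; unfold Gf
    exact mul_pos (div_pos (by nlinarith [mul_pos hsθ hcθ, hθ.1]) (by positivity)) (by positivity)
  rw [show Real.sqrt (π * t) = Real.sqrt (π * t) from rfl]
  rw [Real.lt_sqrt (mul_pos (div_pos hθ.1 hcθ) hr).le]
  rw [← hGf]
  have hθπ : θ ^ 2 < π * (θ + Real.sin θ * Real.cos θ) := by
    nlinarith [hθ.2, Real.pi_pos, mul_pos hsθ hcθ, hθ.1]
  have h3 := mul_lt_mul_of_pos_right hθπ
    (show 0 < r ^ 2 / Real.cos θ ^ 2 by positivity)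
  calc (θ / Real.cos θ * r) ^ 2 = θ ^ 2 * (r ^ 2 / Real.cos θ ^ 2) := by
        rw [mul_pow, div_pow]; ring
    _ < π * (θ + Real.sin θ * Real.cos θ) * (r ^ 2 / Real.cos θ ^ 2) := h3
    _ = π * (Gf θ * r ^ 2) := by unfold Gf; ring

lemma pi_div_two_mem : (π/2) ∈ Ioo 0 π := ⟨by positivity, by linarith [Real.pi_pos]⟩

lemma mu_pi_div_two : mu (π/2) = π/2 := by
  unfold mu; rw [Real.sin_pi_div_two, Real.cos_pi_div_two]; norm_num

lemma nu_pi_div_two : nu (π/2) = π/2 := by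
  unfold nu; rw [Real.sin_pi_div_two]; norm_num

lemma zlower1 {t c ψ : ℝ} (ht : 0 < t) (hc : 0 < c) (hψ : ψ ∈ Ioo 0 π)
    (hmu : c ^ 2 * mu ψ = t) :
    Real.sqrt (π * t / 2) ≤ nu ψ * c ∧
      (nu ψ * c = Real.sqrt (π * t / 2) → c ^ 2 = 2 * t / π) := by
  obtain ⟨hg, hF, hM2, hM⟩ := params_r_zero ht
  have hcon : t - 2 * c * 0 ≤ c ^ 2 * mu ψ := by rw [hmu]; ring_nf; exact le_refl t
  obtain ⟨hle, heqc⟩ := key_ineq ht hM (le_refl 0) hM2 pi_div_two_mem hg hF hψ hc hcon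
  refine ⟨hle, fun heq => ?_⟩
  obtain ⟨hψθ, hceq⟩ := heqc heq
  rw [hψθ, mu_pi_div_two] at hceq
  have hπ := Real.pi_pos
  field_simp at hceq ⊢
  linarith

lemma zlower3 {t : ℝ} (ht : 0 < t) : Real.sqrt (π * t / 2) < Real.sqrt (π * t) := by
  apply Real.sqrt_lt_sqrt (by positivity)
  nlinarith [Real.pi_pos]

lemma zval {t c : ℝ} (ht : 0 < t) (hc : 0 ≤ c) (hc2 : c ^ 2 = 2 * t / π) :
    nu (π/2) * c = Real.sqrt (π * t / 2) ∧ c ^ 2 * mu (π/2) = t ∧ 0 < c := by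
  have hπ := Real.pi_pos
  have hcpos : 0 < c := by
    rcases hc.lt_or_eq with h | h
    · exact h
    · exfalso; rw [← h] at hc2; simp at hc2
      have h9 : 0 < 2 * t / π := by positivity
      rw [← hc2] at h9; simp at h9
  have hceq : c = Real.sqrt (2 * t / π) := by
    rw [← hc2, Real.sqrt_sq hc]
  constructor
  · rw [nu_pi_div_two, hceq]
    rw [show π * t / 2 = (π/2) ^ 2 * (2 * t / π) by field_simp]
    rw [Real.sqrt_mul (sq_nonneg _), Real.sqrt_sq (by positivity)]
  constructor
  · rw [hc2, mu_pi_div_two]; field_simp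
  · exact hcpos

lemma attain {θ r : ℝ} (hθ : θ ∈ Ioo 0 (π/2)) (hr : 0 < r) :
    0 < Real.sin θ / Real.cos θ * r ∧
    nu θ * (Real.sin θ / Real.cos θ * r) = θ / Real.cos θ * r ∧
    (Real.sin θ / Real.cos θ * r) ^ 2 * mu θ
      = Gf θ * r ^ 2 - 2 * (Real.sin θ / Real.cos θ * r) * r ∧
    0 < Gf θ * r ^ 2 - 2 * (Real.sin θ / Real.cos θ * r) * r := by
  have hc := cos_pos' hθ
  have hs := sin_pos'' hθ
  have hmu := mu_pos (theta_in_Ioo hθ)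
  have h1 : 0 < Real.sin θ / Real.cos θ * r := by positivity
  refine ⟨h1, ?_, ?_, ?_⟩
  · unfold nu; field_simp
  · unfold mu Gf; field_simp; ring
  · have h2 : (Real.sin θ / Real.cos θ * r) ^ 2 * mu θ
        = Gf θ * r ^ 2 - 2 * (Real.sin θ / Real.cos θ * r) * r := by
      unfold mu Gf; field_simp; ring
    rw [← h2]
    positivity

lemma mu_eq_form {φ : ℝ} (h : Real.sin φ ≠ 0) :
    (2 * φ - Real.sin (2 * φ)) / (2 * Real.sin φ ^ 2) = mu φ := by
  rw [Real.sin_two_mul]; unfold mu; field_simp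

lemma Gf_eq_form {φ : ℝ} (h : Real.cos φ ≠ 0) :
    (2 * φ + Real.sin (2 * φ)) / (2 * Real.cos φ ^ 2) = Gf φ := by
  rw [Real.sin_two_mul]; unfold Gf; field_simp

open Heis
variable {n : ℕ}

lemma eta_rr (x y : Fin n → ℝ) (t : ℝ) (ξ' : Hpt n) :
    rr (hmul (hinv ξ') (x, y, t))
      = Real.sqrt ((∑ i, (x i - ξ'.1 i) ^ 2) + ∑ i, (y i - ξ'.2.1 i) ^ 2) := by
  unfold rr hmul hinv
  simp only [Pi.add_apply, Pi.neg_apply]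
  congr 1
  congr 1
  · exact Finset.sum_congr rfl fun i _ => by ring
  · exact Finset.sum_congr rfl fun i _ => by ring

lemma eta_t (x y : Fin n → ℝ) (t : ℝ) (ξ' : Hpt n) (hb : ξ'.2.2 = 0) :
    (hmul (hinv ξ') (x, y, t)).2.2
      = t + 2 * ∑ i, ((x i - ξ'.1 i) * y i - (y i - ξ'.2.1 i) * x i) := by
  unfold hmul hinv
  simp only [Pi.neg_apply]
  rw [hb]
  rw [show ∑ i, (-ξ'.1 i * y i - -ξ'.2.1 i * x i)
      = ∑ i, ((x i - ξ'.1 i) * y i - (y i - ξ'.2.1 i) * x i) from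
    Finset.sum_congr rfl fun i _ => by ring]
  ring

lemma sum_pair_p (a b : Fin n → ℝ) :
    ∑ j : Fin n ⊕ Fin n, (Sum.elim a b j) ^ 2 = (∑ i, a i ^ 2) + ∑ i, b i ^ 2 := by
  rw [Fintype.sum_sum_type]; simp

lemma sum_pair_q (x y : Fin n → ℝ) :
    ∑ j : Fin n ⊕ Fin n, (Sum.elim y (fun i => -x i) j) ^ 2
      = (∑ i, x i ^ 2) + ∑ i, y i ^ 2 := by
  rw [Fintype.sum_sum_type]
  simp only [Sum.elim_inl, Sum.elim_inr]
  rw [show ∑ i, (-x i) ^ 2 = ∑ i, x i ^ 2 from Finset.sum_congr rfl fun i _ => by ring]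
  ring

lemma sum_pair_pq (a b x y : Fin n → ℝ) :
    ∑ j : Fin n ⊕ Fin n, Sum.elim a b j * Sum.elim y (fun i => -x i) j
      = ∑ i, (a i * y i - b i * x i) := by
  rw [Fintype.sum_sum_type]
  simp only [Sum.elim_inl, Sum.elim_inr]
  rw [← Finset.sum_add_distrib]
  exact Finset.sum_congr rfl fun i _ => by ring

lemma cs_spec (a b x y : Fin n → ℝ) :
    |∑ i, (a i * y i - b i * x i)|
      ≤ Real.sqrt ((∑ i, a i ^ 2) + ∑ i, b i ^ 2)
        * Real.sqrt ((∑ i, x i ^ 2) + ∑ i, y i ^ 2) := by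
  have h := cs_le (Sum.elim a b) (Sum.elim y (fun i => -x i))
  rwa [sum_pair_p, sum_pair_q, sum_pair_pq] at h

lemma cs_eq_spec (a b x y : Fin n → ℝ)
    (h : ∑ i, (a i * y i - b i * x i)
      = -(Real.sqrt ((∑ i, a i ^ 2) + ∑ i, b i ^ 2)
          * Real.sqrt ((∑ i, x i ^ 2) + ∑ i, y i ^ 2))) :
    ∀ i, Real.sqrt ((∑ i, x i ^ 2) + ∑ i, y i ^ 2) * a i
        = -(Real.sqrt ((∑ i, a i ^ 2) + ∑ i, b i ^ 2) * y i)
      ∧ Real.sqrt ((∑ i, x i ^ 2) + ∑ i, y i ^ 2) * b i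
        = Real.sqrt ((∑ i, a i ^ 2) + ∑ i, b i ^ 2) * x i := by
  have h' := cs_eq (Sum.elim a b) (Sum.elim y (fun i => -x i))
    (by rw [sum_pair_q, sum_pair_p, sum_pair_pq]; exact h)
  rw [sum_pair_q, sum_pair_p] at h'
  intro i
  constructor
  · have h2 := h' (Sum.inl i)
    rwa [Sum.elim_inl, Sum.elim_inl] at h2
  · have h2 := h' (Sum.inr i)
    rw [Sum.elim_inr, Sum.elim_inr] at h2
    linarith [h2]


end HeisProof

set_option maxHeartbeats 1000000 in
open Heis in
/-- explicit formula for the Carnot–Carathéodory distance of ξ ∈ Π₀ = {t > 0}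
to ∂Π₀, together with the description of the points at which the infimum is attained. -/
theorem dCC_halfspace_formula (n : ℕ) (hn : 1 ≤ n) (ccρ : Hpt n → ℝ)
    (hccρ : IsCCNorm ccρ) :
    ∀ ξ : Hpt n, 0 < ξ.2.2 →
      (rr ξ ≠ 0 →
        (∃! φ : ℝ, 0 < φ ∧ φ < π / 2 ∧
          (2 * φ + Real.sin (2 * φ)) / (2 * Real.cos φ ^ 2) = ξ.2.2 / rr ξ ^ 2) ∧
        (∀ φ : ℝ, 0 < φ → φ < π / 2 →
          (2 * φ + Real.sin (2 * φ)) / (2 * Real.cos φ ^ 2) = ξ.2.2 / rr ξ ^ 2 →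
          distCC ccρ {η : Hpt n | η.2.2 = 0} ξ = (φ / Real.cos φ) * rr ξ) ∧
        (∃! ξ' : Hpt n, nearestCC ccρ {η : Hpt n | η.2.2 = 0} ξ' ξ)) ∧
      (rr ξ = 0 →
        distCC ccρ {η : Hpt n | η.2.2 = 0} ξ = Real.sqrt (π * ξ.2.2 / 2) ∧
        (∀ ξ' : Hpt n, ξ'.2.2 = 0 →
          (nearestCC ccρ {η : Hpt n | η.2.2 = 0} ξ' ξ ↔
            (∑ i, ξ'.1 i ^ 2) + ∑ i, ξ'.2.1 i ^ 2 = 2 * ξ.2.2 / π))) := by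
  obtain ⟨hc1, hc2, hc3⟩ := hccρ
  intro ξ htpos
  obtain ⟨x, y, t⟩ := ξ
  simp only at htpos
  haveI hnB : Nonempty {η : Hpt n // η ∈ {η : Hpt n | η.2.2 = 0}} :=
    ⟨⟨((0 : Fin n → ℝ), (0 : Fin n → ℝ), (0:ℝ)), rfl⟩⟩
  constructor
  · -- case r ≠ 0
    intro hrne
    have hR2nn : (0:ℝ) ≤ (∑ i, x i ^ 2) + ∑ i, y i ^ 2 := by positivity
    have hrreq : rr ((x, y, t) : Hpt n)
        = Real.sqrt ((∑ i, x i ^ 2) + ∑ i, y i ^ 2) := rfl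
    have hR2pos : 0 < (∑ i, x i ^ 2) + ∑ i, y i ^ 2 := by
      rcases hR2nn.lt_or_eq with h | h
      · exact h
      · exact absurd (by rw [hrreq, ← h, Real.sqrt_zero]) hrne
    set R2 := (∑ i, x i ^ 2) + ∑ i, y i ^ 2 with hR2def
    set r := Real.sqrt R2 with hrdef
    have hrpos : 0 < r := Real.sqrt_pos.2 hR2pos
    have hr2 : r ^ 2 = R2 := Real.sq_sqrt hR2nn
    have hrrsq : rr ((x, y, t) : Hpt n) ^ 2 = R2 := by rw [hrreq]; exact hr2
    obtain ⟨θ, hθmem, hθval⟩ :=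
      HeisProof.Gf_surj (show 0 < t / R2 from div_pos htpos hR2pos)
    have hcθ := HeisProof.cos_pos' hθmem
    have hsθ := HeisProof.sin_pos'' hθmem
    have hGf' : HeisProof.Gf θ * r ^ 2 = t := by rw [hr2, hθval]; field_simp
    set M := θ / Real.cos θ * r with hMdef
    have huniq : ∀ φ : ℝ, 0 < φ → φ < π/2 →
        (2*φ + Real.sin (2*φ)) / (2*Real.cos φ ^ 2) = t / rr ((x, y, t) : Hpt n) ^ 2 →
        φ = θ := by
      intro φ h1 h2 h3
      rw [HeisProof.Gf_eq_form (ne_of_gt (HeisProof.cos_pos' ⟨h1, h2⟩)), hrrsq, ← hθval] at h3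
      exact HeisProof.Gf_strictMonoOn.injOn ⟨h1, h2⟩ hθmem h3
    set ξ'₀ : Hpt n := (fun i => x i + Real.sin θ / Real.cos θ * y i,
      fun i => y i - Real.sin θ / Real.cos θ * x i, 0) with hxi0def
    obtain ⟨hlampos, hnuval, hmuval, hSattain⟩ := HeisProof.attain hθmem hrpos
    -- value at the attaining point
    have hval₀ : ccρ (hmul (hinv ξ'₀) (x, y, t)) = M := by
      have hA0 : (∑ i, (x i - ξ'₀.1 i) ^ 2) + ∑ i, (y i - ξ'₀.2.1 i) ^ 2
          = (Real.sin θ / Real.cos θ * r) ^ 2 := by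
        have e1 : ∑ i, (x i - ξ'₀.1 i) ^ 2
            = (Real.sin θ / Real.cos θ) ^ 2 * ∑ i, y i ^ 2 := by
          rw [Finset.mul_sum]
          exact Finset.sum_congr rfl fun i _ => by simp only [hxi0def]; ring
        have e2 : ∑ i, (y i - ξ'₀.2.1 i) ^ 2
            = (Real.sin θ / Real.cos θ) ^ 2 * ∑ i, x i ^ 2 := by
          rw [Finset.mul_sum]
          exact Finset.sum_congr rfl fun i _ => by simp only [hxi0def]; ring
        rw [e1, e2, mul_pow, hr2, hR2def]
        ring
      have hrrη : rr (hmul (hinv ξ'₀) (x, y, t)) = Real.sin θ / Real.cos θ * r := by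
        rw [HeisProof.eta_rr, hA0, Real.sqrt_sq hlampos.le]
      have hD0 : ∑ i, ((x i - ξ'₀.1 i) * y i - (y i - ξ'₀.2.1 i) * x i)
          = -(Real.sin θ / Real.cos θ * r * r) := by
        have e : ∑ i, ((x i - ξ'₀.1 i) * y i - (y i - ξ'₀.2.1 i) * x i)
            = ∑ i, (-(Real.sin θ / Real.cos θ) * (y i ^ 2 + x i ^ 2)) :=
          Finset.sum_congr rfl fun i _ => by simp only [hxi0def]; ring
        rw [e, ← Finset.mul_sum, Finset.sum_add_distrib]
        rw [show (∑ i, y i ^ 2) + ∑ i, x i ^ 2 = R2 from by rw [hR2def]; ring]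
        rw [← hr2]; ring
      have hSval : (hmul (hinv ξ'₀) (x, y, t)).2.2
          = t - 2 * (Real.sin θ / Real.cos θ * r * r) := by
        rw [HeisProof.eta_t x y t ξ'₀ rfl, hD0]; ring
      have hSmu : (Real.sin θ / Real.cos θ * r) ^ 2 * HeisProof.mu θ
          = t - 2 * (Real.sin θ / Real.cos θ * r * r) := by
        have h9 := hmuval; rw [hGf'] at h9; linarith
      have hSpos' : 0 < t - 2 * (Real.sin θ / Real.cos θ * r * r) := by
        have h9 := hSattain; rw [hGf'] at h9; linarith
      have hrne0 : rr (hmul (hinv ξ'₀) (x, y, t)) ≠ 0 := by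
        rw [hrrη]; exact ne_of_gt hlampos
      have htne0 : (hmul (hinv ξ'₀) (x, y, t)).2.2 ≠ 0 := by
        rw [hSval]; exact ne_of_gt hSpos'
      have heqφ : (2*θ - Real.sin (2*θ)) / (2*Real.sin θ ^ 2)
          = |(hmul (hinv ξ'₀) (x, y, t)).2.2| / rr (hmul (hinv ξ'₀) (x, y, t)) ^ 2 := by
        rw [HeisProof.mu_eq_form (ne_of_gt hsθ), hSval, hrrη, abs_of_pos hSpos', ← hSmu]
        field_simp
      have h0 := hc3 _ hrne0 htne0 θ hθmem.1 (by linarith [hθmem.2, Real.pi_pos]) heqφ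
      rw [h0, hrrη, hMdef]
      have h9 := hnuval
      unfold HeisProof.nu at h9
      linarith
    -- the lower bound and equality characterization
    have LB : ∀ ξ' : Hpt n, ξ'.2.2 = 0 →
        M ≤ ccρ (hmul (hinv ξ') (x, y, t)) ∧
          (ccρ (hmul (hinv ξ') (x, y, t)) = M → ξ' = ξ'₀) := by
      intro ξ' hb
      have hrrη := HeisProof.eta_rr x y t ξ'
      have htη := HeisProof.eta_t x y t ξ' hb
      set A := (∑ i, (x i - ξ'.1 i) ^ 2) + ∑ i, (y i - ξ'.2.1 i) ^ 2 with hAdef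
      set D := ∑ i, ((x i - ξ'.1 i) * y i - (y i - ξ'.2.1 i) * x i) with hDdef
      clear_value A D
      have hAnn : (0:ℝ) ≤ A := by rw [hAdef]; positivity
      have hCS : |D| ≤ Real.sqrt A * r := by
        rw [hDdef, hAdef, hrdef, hR2def]
        exact HeisProof.cs_spec _ _ x y
      by_cases hA0 : A = 0
      · have hsq : Real.sqrt A = 0 := by rw [hA0, Real.sqrt_zero]
        have hD0 : D = 0 := by
          rw [hsq, zero_mul] at hCS
          exact abs_eq_zero.1 (le_antisymm hCS (abs_nonneg D))
        have hval : ccρ (hmul (hinv ξ') (x, y, t)) = Real.sqrt (π * t) := by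
          have h0 := hc1 _ (show rr (hmul (hinv ξ') (x, y, t)) = 0 by rw [hrrη, hsq])
          rw [htη, hD0] at h0
          rw [h0]
          norm_num [abs_of_pos htpos]
        rw [hval]
        have hlt := HeisProof.lower3 hrpos hθmem hGf'
        exact ⟨hlt.le, fun he => absurd hlt (by rw [he]; exact lt_irrefl M)⟩
      · have hApos : 0 < A := hAnn.lt_of_ne (Ne.symm hA0)
        have hcpos : 0 < Real.sqrt A := Real.sqrt_pos.2 hApos
        have hcsq : Real.sqrt A ^ 2 = A := Real.sq_sqrt hAnn
        have hrne' : rr (hmul (hinv ξ') (x, y, t)) ≠ 0 := by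
          rw [hrrη]; exact ne_of_gt hcpos
        by_cases hSz : t + 2 * D = 0
        · have hval : ccρ (hmul (hinv ξ') (x, y, t)) = Real.sqrt A := by
            have h0 := hc2 _ hrne' (by rw [htη]; exact hSz)
            rw [h0, hrrη]
          have h2cr : t ≤ 2 * Real.sqrt A * r := by
            have h6 : -(2*D) ≤ 2*|D| := by linarith [neg_abs_le D]
            have h7 : 2*|D| ≤ 2*(Real.sqrt A * r) := by linarith [hCS]
            linarith
          have hlt := HeisProof.lower2 hrpos hθmem hGf' hcpos h2cr
          rw [hval]
          exact ⟨hlt.le, fun he => absurd hlt (by rw [he]; exact lt_irrefl M)⟩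
        · have habspos : 0 < |t + 2*D| := abs_pos.2 hSz
          obtain ⟨ψ, hψmem, hψval⟩ := HeisProof.mu_surj
            (show 0 < |t + 2*D| / Real.sqrt A ^ 2 from div_pos habspos (by positivity))
          have hmuc : Real.sqrt A ^ 2 * HeisProof.mu ψ = |t + 2*D| := by
            rw [hψval]; field_simp
          have hval : ccρ (hmul (hinv ξ') (x, y, t)) = HeisProof.nu ψ * Real.sqrt A := by
            have heqφ : (2*ψ - Real.sin (2*ψ)) / (2*Real.sin ψ ^ 2)
                = |(hmul (hinv ξ') (x, y, t)).2.2|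
                  / rr (hmul (hinv ξ') (x, y, t)) ^ 2 := by
              rw [HeisProof.mu_eq_form (ne_of_gt (HeisProof.sin_pos' hψmem)), htη, hrrη,
                hψval]
            have h0 := hc3 _ hrne' (by rw [htη]; exact hSz) ψ hψmem.1 hψmem.2 heqφ
            rw [h0, hrrη]
            rfl
          have hScond : |(t + 2*D) - t| ≤ 2 * Real.sqrt A * r := by
            rw [show (t + 2*D) - t = 2*D by ring, abs_mul]
            rw [show |(2:ℝ)| = 2 by norm_num]
            linarith [hCS]
          have hkey := HeisProof.lower1 hrpos hθmem hGf' hcpos hψmem hmuc hScond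
          rw [hval]
          refine ⟨hkey.1, fun he => ?_⟩
          obtain ⟨hψθ, hceq, hSeq⟩ := hkey.2 he
          have hD2 : D = -(Real.sqrt A * r) := by linarith [hSeq]
          have harg : ∑ i, ((x i - ξ'.1 i) * y i - (y i - ξ'.2.1 i) * x i)
              = -(Real.sqrt ((∑ i, (x i - ξ'.1 i) ^ 2) + ∑ i, (y i - ξ'.2.1 i) ^ 2)
                  * Real.sqrt ((∑ i, x i ^ 2) + ∑ i, y i ^ 2)) := by
            rw [← hDdef, ← hAdef, ← hR2def, ← hrdef]
            exact hD2
          have hqe := HeisProof.cs_eq_spec (fun i => x i - ξ'.1 i)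
            (fun i => y i - ξ'.2.1 i) x y harg
          have hr0' : r ≠ 0 := ne_of_gt hrpos
          refine Prod.ext_iff.2 ⟨funext fun i => ?_, Prod.ext_iff.2 ⟨funext fun i => ?_, ?_⟩⟩
          · have h1 := (hqe i).1
            rw [← hR2def, ← hrdef, ← hAdef, hceq] at h1
            have h3 : r * (ξ'.1 i - (x i + Real.sin θ / Real.cos θ * y i)) = 0 := by
              linear_combination -h1
            rcases mul_eq_zero.1 h3 with h | h
            · exact absurd h hr0'
            · have : ξ'.1 i = x i + Real.sin θ / Real.cos θ * y i := by linarith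
              rw [this]
          · have h1 := (hqe i).2
            rw [← hR2def, ← hrdef, ← hAdef, hceq] at h1
            have h3 : r * (ξ'.2.1 i - (y i - Real.sin θ / Real.cos θ * x i)) = 0 := by
              linear_combination -h1
            rcases mul_eq_zero.1 h3 with h | h
            · exact absurd h hr0'
            · have : ξ'.2.1 i = y i - Real.sin θ / Real.cos θ * x i := by linarith
              rw [this]
          · rw [hb]
    have hbdd : BddBelow (Set.range fun b : {η : Hpt n // η ∈ {η : Hpt n | η.2.2 = 0}} =>
        ccρ (hmul (hinv (b : Hpt n)) (x, y, t))) :=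
      ⟨M, by rintro v ⟨b, rfl⟩; exact (LB b.1 b.2).1⟩
    have hmem₀ : ξ'₀ ∈ {η : Hpt n | η.2.2 = 0} := rfl
    have hdist : distCC ccρ {η : Hpt n | η.2.2 = 0} ((x, y, t) : Hpt n) = M := by
      apply le_antisymm
      · exact le_of_le_of_eq (ciInf_le hbdd ⟨ξ'₀, hmem₀⟩) hval₀
      · exact le_ciInf fun b => (LB b.1 b.2).1
    refine ⟨⟨θ, ⟨hθmem.1, hθmem.2, ?_⟩, fun φ hφ => huniq φ hφ.1 hφ.2.1 hφ.2.2⟩,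
      fun φ h1 h2 h3 => ?_, ⟨ξ'₀, ⟨hmem₀, by rw [hval₀, hdist]⟩, fun ξ'' h'' => ?_⟩⟩
    · rw [HeisProof.Gf_eq_form (ne_of_gt hcθ), hrrsq, hθval]
    · rw [huniq φ h1 h2 h3, hdist, hrreq]
    · obtain ⟨hmem'', hval''⟩ := h''
      exact (LB ξ'' hmem'').2 (by rw [hval'', hdist])
  · -- case r = 0
    intro hr0
    have hrreq : rr ((x, y, t) : Hpt n)
        = Real.sqrt ((∑ i, x i ^ 2) + ∑ i, y i ^ 2) := rfl
    have hR2nn : (0:ℝ) ≤ (∑ i, x i ^ 2) + ∑ i, y i ^ 2 := by positivity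
    have hR2z : (∑ i, x i ^ 2) + ∑ i, y i ^ 2 = 0 := by
      rw [hrreq] at hr0
      exact (Real.sqrt_eq_zero hR2nn).1 hr0
    have hxnn : (0:ℝ) ≤ ∑ i, x i ^ 2 := by positivity
    have hynn : (0:ℝ) ≤ ∑ i, y i ^ 2 := by positivity
    have hxz : ∀ i, x i = 0 := by
      intro i
      have hx2 : ∑ i, x i ^ 2 = 0 := by linarith
      have := (Finset.sum_eq_zero_iff_of_nonneg (fun j _ => sq_nonneg (x j))).1 hx2 i
        (Finset.mem_univ i)
      exact (pow_eq_zero_iff two_ne_zero).1 this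
    have hyz : ∀ i, y i = 0 := by
      intro i
      have hy2 : ∑ i, y i ^ 2 = 0 := by linarith
      have := (Finset.sum_eq_zero_iff_of_nonneg (fun j _ => sq_nonneg (y j))).1 hy2 i
        (Finset.mem_univ i)
      exact (pow_eq_zero_iff two_ne_zero).1 this
    have LB0 : ∀ ξ' : Hpt n, ξ'.2.2 = 0 →
        Real.sqrt (π * t / 2) ≤ ccρ (hmul (hinv ξ') (x, y, t)) ∧
          (ccρ (hmul (hinv ξ') (x, y, t)) = Real.sqrt (π * t / 2) ↔
            (∑ i, ξ'.1 i ^ 2) + ∑ i, ξ'.2.1 i ^ 2 = 2 * t / π) := by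
      intro ξ' hb
      have hrrη := HeisProof.eta_rr x y t ξ'
      have htη := HeisProof.eta_t x y t ξ' hb
      have hAeq : (∑ i, (x i - ξ'.1 i) ^ 2) + ∑ i, (y i - ξ'.2.1 i) ^ 2
          = (∑ i, ξ'.1 i ^ 2) + ∑ i, ξ'.2.1 i ^ 2 := by
        congr 1
        · exact Finset.sum_congr rfl fun i _ => by rw [hxz i]; ring
        · exact Finset.sum_congr rfl fun i _ => by rw [hyz i]; ring
      have hDeq : ∑ i, ((x i - ξ'.1 i) * y i - (y i - ξ'.2.1 i) * x i) = 0 :=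
        Finset.sum_eq_zero fun i _ => by rw [hxz i, hyz i]; ring
      rw [hAeq] at hrrη
      rw [hDeq] at htη
      have htη' : (hmul (hinv ξ') (x, y, t)).2.2 = t := by rw [htη]; ring
      set A := (∑ i, ξ'.1 i ^ 2) + ∑ i, ξ'.2.1 i ^ 2 with hAdef
      clear_value A
      have hAnn : (0:ℝ) ≤ A := by rw [hAdef]; positivity
      have h2tπ : 0 < 2 * t / π := by positivity
      by_cases hA0 : A = 0
      · have hval : ccρ (hmul (hinv ξ') (x, y, t)) = Real.sqrt (π * t) := by
          have h0 := hc1 _ (show rr (hmul (hinv ξ') (x, y, t)) = 0 by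
            rw [hrrη, hA0, Real.sqrt_zero])
          rw [htη'] at h0
          rw [h0, abs_of_pos htpos]
        have hlt := HeisProof.zlower3 htpos
        rw [hval]
        refine ⟨hlt.le, ?_, ?_⟩
        · intro he; exact absurd hlt (by rw [he]; exact lt_irrefl _)
        · intro hA2; exfalso; rw [hA0] at hA2; linarith
      · have hApos : 0 < A := hAnn.lt_of_ne (Ne.symm hA0)
        have hcpos : 0 < Real.sqrt A := Real.sqrt_pos.2 hApos
        have hcsq : Real.sqrt A ^ 2 = A := Real.sq_sqrt hAnn
        have hrne' : rr (hmul (hinv ξ') (x, y, t)) ≠ 0 := by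
          rw [hrrη]; exact ne_of_gt hcpos
        have htne' : (hmul (hinv ξ') (x, y, t)).2.2 ≠ 0 := by
          rw [htη']; exact ne_of_gt htpos
        obtain ⟨ψ, hψmem, hψval⟩ := HeisProof.mu_surj
          (show 0 < t / Real.sqrt A ^ 2 from div_pos htpos (by positivity))
        have hmuc : Real.sqrt A ^ 2 * HeisProof.mu ψ = t := by rw [hψval]; field_simp
        have hval : ccρ (hmul (hinv ξ') (x, y, t)) = HeisProof.nu ψ * Real.sqrt A := by
          have heqφ : (2*ψ - Real.sin (2*ψ)) / (2*Real.sin ψ ^ 2)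
              = |(hmul (hinv ξ') (x, y, t)).2.2|
                / rr (hmul (hinv ξ') (x, y, t)) ^ 2 := by
            rw [HeisProof.mu_eq_form (ne_of_gt (HeisProof.sin_pos' hψmem)), htη', hrrη,
              abs_of_pos htpos, hψval]
          have h0 := hc3 _ hrne' htne' ψ hψmem.1 hψmem.2 heqφ
          rw [h0, hrrη]; rfl
        have hkey := HeisProof.zlower1 htpos hcpos hψmem hmuc
        refine ⟨by rw [hval]; exact hkey.1, ?_, ?_⟩
        · intro he
          rw [hval] at he
          have h9 := hkey.2 he
          rw [← hcsq]; exact h9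
        · intro hA2
          have hc2' : Real.sqrt A ^ 2 = 2*t/π := by rw [hcsq]; exact hA2
          obtain ⟨hnuv, hmuv, hcpos'⟩ := HeisProof.zval htpos (Real.sqrt_nonneg A) hc2'
          have heqφ : (2*(π/2) - Real.sin (2*(π/2))) / (2*Real.sin (π/2) ^ 2)
              = |(hmul (hinv ξ') (x, y, t)).2.2|
                / rr (hmul (hinv ξ') (x, y, t)) ^ 2 := by
            rw [HeisProof.mu_eq_form (by rw [Real.sin_pi_div_two]; norm_num), htη', hrrη,
              abs_of_pos htpos, ← hmuv]
            field_simp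
          have h0 := hc3 _ hrne' htne' (π/2) (by positivity)
            (by linarith [Real.pi_pos]) heqφ
          rw [h0, hrrη]
          have h9 := hnuv
          unfold HeisProof.nu at h9
          linarith
    set jj : Fin n := ⟨0, hn⟩ with hjdef
    set v := Real.sqrt (2*t/π) with hvdef
    set ξ'₀ : Hpt n := (fun i => if i = jj then v else 0, 0, 0) with hxi0def
    have hmem₀ : ξ'₀ ∈ {η : Hpt n | η.2.2 = 0} := rfl
    have hA₀ : (∑ i, ξ'₀.1 i ^ 2) + ∑ i, ξ'₀.2.1 i ^ 2 = 2*t/π := by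
      have h1 : ∑ i, ξ'₀.1 i ^ 2 = v^2 := by
        simp only [hxi0def]
        rw [Finset.sum_congr rfl (fun i _ =>
          show (if i = jj then v else 0)^2 = if i = jj then v^2 else 0 from by
            split_ifs <;> ring)]
        simp [Finset.sum_ite_eq']
      have h2 : ∑ i, ξ'₀.2.1 i ^ 2 = 0 := by simp [hxi0def]
      rw [h1, h2, hvdef, Real.sq_sqrt (le_of_lt (by positivity : (0:ℝ) < 2*t/π))]
      ring
    have hval₀ : ccρ (hmul (hinv ξ'₀) (x, y, t)) = Real.sqrt (π*t/2) :=
      ((LB0 ξ'₀ rfl).2).2 hA₀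
    have hbdd : BddBelow (Set.range fun b : {η : Hpt n // η ∈ {η : Hpt n | η.2.2 = 0}} =>
        ccρ (hmul (hinv (b : Hpt n)) (x, y, t))) :=
      ⟨Real.sqrt (π*t/2), by rintro w ⟨b, rfl⟩; exact (LB0 b.1 b.2).1⟩
    have hdist : distCC ccρ {η : Hpt n | η.2.2 = 0} ((x, y, t) : Hpt n)
        = Real.sqrt (π*t/2) := by
      apply le_antisymm
      · exact le_of_le_of_eq (ciInf_le hbdd ⟨ξ'₀, hmem₀⟩) hval₀
      · exact le_ciInf fun b => (LB0 b.1 b.2).1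
    refine ⟨hdist, fun ξ' hb' => ⟨?_, ?_⟩⟩
    · intro hnear
      obtain ⟨hm, hv⟩ := hnear
      exact ((LB0 ξ' hb').2).1 (by rw [hv, hdist])
    · intro hA2
      exact ⟨hb', by rw [((LB0 ξ' hb').2).2 hA2, hdist]⟩
end
end

section
/- Let Π₀ = {(x,y,t) ∈ ℍⁿ : t > 0} and let d_ρ(ξ) = inf{ ρ(ξ'⁻¹ξ) : ξ' ∈ ∂Π₀ } denote the Carnot–Carathéodory distance to ∂Π₀, which depends only on r = √(|x|²+|y|²) and t. Then for every fixed r ≠ 0, d_ρ(r,t) = t/(2r) + o(t) as t → 0⁺; that is, lim_{t→0⁺} (d_ρ(r,t) − t/(2r))/t = 0. -/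
open MeasureTheory Real Set Filter

noncomputable section

section AuxLemmas

open Heis

lemma aux_sub_cube {φ : ℝ} (hφ : 0 < φ) : 2*φ - Real.sin (2*φ) ≤ 8*φ^2 := by
  rcases le_or_gt φ (1/2) with h | h
  · have h2 := Real.sin_gt_sub_cube (by linarith : (0:ℝ) < 2*φ)
    nlinarith
  · have h2 := Real.neg_one_le_sin (2*φ)
    nlinarith [mul_pos (by linarith : (0:ℝ) < 2*φ-1) (by linarith : (0:ℝ) < 4*φ+1)]

lemma aux_mu_exists (v : ℝ) (hv : 0 < v) :
    ∃ φ : ℝ, 0 < φ ∧ φ < π ∧ (2*φ - Real.sin (2*φ)) / (2 * Real.sin φ ^ 2) = v := by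
  have hπ3 : (3:ℝ) < π := Real.pi_gt_three
  have hπ4 : π < 3.15 := by
    have := Real.pi_lt_d2; linarith
  set f : ℝ → ℝ := fun φ => (2*φ - Real.sin (2*φ)) / (2 * Real.sin φ ^ 2) with hf
  set φ₁ : ℝ := min (v/3) (1/2) with hφ₁d
  set d : ℝ := min (Real.sqrt (π/(2*(v+1)))) 1 with hdd
  set φ₂ : ℝ := π - d with hφ₂d
  have hφ₁pos : 0 < φ₁ := lt_min (by positivity) (by norm_num)
  have hφ₁le : φ₁ ≤ 1/2 := min_le_right _ _
  have hφ₁v : 3*φ₁ ≤ v := by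
    have := min_le_left (v/3) (1/2); rw [← hφ₁d] at this; linarith
  have hdpos : 0 < d := lt_min (Real.sqrt_pos.2 (by positivity)) one_pos
  have hdle : d ≤ 1 := min_le_right _ _
  have hφ₂lt : φ₂ < π := by rw [hφ₂d]; linarith
  have hφ₂ge : π - 1 ≤ φ₂ := by rw [hφ₂d]; linarith
  have h12 : φ₁ ≤ φ₂ := by linarith
  have hsinpos : ∀ φ ∈ Set.Icc φ₁ φ₂, 0 < Real.sin φ := fun φ hφ =>
    Real.sin_pos_of_pos_of_lt_pi (lt_of_lt_of_le hφ₁pos hφ.1) (lt_of_le_of_lt hφ.2 hφ₂lt)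
  have hcont : ContinuousOn f (Set.Icc φ₁ φ₂) := by
    apply ContinuousOn.div
    · fun_prop
    · fun_prop
    · intro φ hφ
      have h := hsinpos φ hφ
      have : (0:ℝ) < 2 * Real.sin φ ^ 2 := by nlinarith
      exact this.ne'
  have hs1pos : 0 < Real.sin φ₁ := hsinpos φ₁ ⟨le_refl _, h12⟩
  have hfφ₁ : f φ₁ ≤ v := by
    simp only [hf]
    rw [div_le_iff₀ (by nlinarith : (0:ℝ) < 2 * Real.sin φ₁ ^ 2)]
    have hsin₁ : 2/π * φ₁ ≤ Real.sin φ₁ := Real.mul_le_sin hφ₁pos.le (by linarith)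
    have h3 : (40/63 : ℝ) * φ₁ ≤ Real.sin φ₁ := by
      refine le_trans ?_ hsin₁
      have : (40/63 : ℝ) ≤ 2/π := by
        rw [div_le_div_iff₀ (by norm_num) (by linarith)]; linarith
      nlinarith [hφ₁pos.le]
    have hS2 : ((40/63 : ℝ)*φ₁)^2 ≤ Real.sin φ₁^2 := pow_le_pow_left₀ (by positivity) h3 2
    have hcube := Real.sin_gt_sub_cube (by linarith : (0:ℝ) < 2*φ₁)
    nlinarith [hcube, hS2, hφ₁v, hφ₁pos, hv, mul_le_mul_of_nonneg_right hφ₁v (sq_nonneg φ₁)]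
  have hs2pos : 0 < Real.sin φ₂ := hsinpos φ₂ ⟨h12, le_refl _⟩
  have hvφ₂ : v ≤ f φ₂ := by
    simp only [hf]
    rw [le_div_iff₀ (by nlinarith : (0:ℝ) < 2 * Real.sin φ₂ ^ 2)]
    have hsin₂ : Real.sin φ₂ = Real.sin d := by rw [hφ₂d, Real.sin_pi_sub]
    have hsd_le : Real.sin d ≤ d := (Real.sin_lt hdpos).le
    have hsd_pos : 0 < Real.sin d := Real.sin_pos_of_pos_of_lt_pi hdpos (by linarith)
    have hd2 : d^2 ≤ π/(2*(v+1)) := by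
      have h := min_le_left (Real.sqrt (π/(2*(v+1)))) 1
      rw [← hdd] at h
      calc d^2 ≤ Real.sqrt (π/(2*(v+1)))^2 := pow_le_pow_left₀ hdpos.le h 2
        _ = π/(2*(v+1)) := Real.sq_sqrt (by positivity)
    have hsle : Real.sin (2*φ₂) ≤ 1 := Real.sin_le_one _
    have h1 : Real.sin d ^2 ≤ d^2 := pow_le_pow_left₀ hsd_pos.le hsd_le 2
    have hd2' : d^2 * (2*(v+1)) ≤ π := by
      rw [le_div_iff₀ (by linarith : (0:ℝ) < 2*(v+1))] at hd2; exact hd2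
    have h2d : v * (2*d^2) ≤ 2*π - 3 := by
      nlinarith [mul_le_mul_of_nonneg_left hd2' hv.le, hv, hπ3,
        (by linarith : (0:ℝ) < v+1), mul_nonneg hv.le (sq_nonneg d)]
    have h4 : v * (2 * Real.sin d ^2) ≤ v * (2*d^2) := by
      apply mul_le_mul_of_nonneg_left _ hv.le; linarith
    rw [hsin₂]
    linarith
  obtain ⟨φ, hφI, hφv⟩ := intermediate_value_Icc h12 hcont ⟨hfφ₁, hvφ₂⟩
  refine ⟨φ, lt_of_lt_of_le hφ₁pos hφI.1, lt_of_le_of_lt hφI.2 hφ₂lt, ?_⟩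
  simp only [hf] at hφv
  exact hφv

lemma rr_nonneg {n : ℕ} (δ : Hpt n) : 0 ≤ rr δ := Real.sqrt_nonneg _

lemma rho_lower {n : ℕ} {ccρ : Hpt n → ℝ} (h : IsCCNorm ccρ) (δ : Hpt n) :
    rr δ ≤ ccρ δ ∧ |δ.2.2| / 4 ≤ ccρ δ ^ 2 := by
  obtain ⟨h0, h1, h2⟩ := h
  by_cases hr0 : rr δ = 0
  · have hc := h0 δ hr0
    constructor
    · rw [hc, hr0]; exact Real.sqrt_nonneg _
    · rw [hc, Real.sq_sqrt (by positivity)]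
      nlinarith [abs_nonneg δ.2.2, Real.pi_gt_three]
  · by_cases hs : δ.2.2 = 0
    · have hc := h1 δ hr0 hs
      exact ⟨le_of_eq hc.symm, by rw [hs]; simpa using sq_nonneg (ccρ δ)⟩
    · have hrpos : 0 < rr δ := (rr_nonneg δ).lt_of_ne (Ne.symm hr0)
      have hspos : 0 < |δ.2.2| := abs_pos.2 hs
      obtain ⟨φ, hφ0, hφπ, hφeq⟩ := aux_mu_exists (|δ.2.2| / rr δ ^ 2) (by positivity)
      have hρ := h2 δ hr0 hs φ hφ0 hφπ hφeq
      have hsinφ : 0 < Real.sin φ := Real.sin_pos_of_pos_of_lt_pi hφ0 hφπ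
      have hsinle : Real.sin φ ≤ φ := (Real.sin_lt hφ0).le
      constructor
      · rw [hρ]
        exact le_mul_of_one_le_left hrpos.le ((one_le_div hsinφ).2 hsinle)
      · have habs : |δ.2.2| = (2*φ - Real.sin (2*φ)) / (2 * Real.sin φ ^ 2) * rr δ ^2 := by
          rw [hφeq]; field_simp
        rw [hρ, habs]
        have key := aux_sub_cube hφ0
        have heq2 : (φ / Real.sin φ * rr δ)^2
            - ((2*φ - Real.sin (2*φ)) / (2 * Real.sin φ ^ 2) * rr δ ^2)/4
            = (8*φ^2 - (2*φ - Real.sin (2*φ))) * rr δ^2 / (8 * Real.sin φ^2) := by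
          field_simp; ring
        have hpos : 0 ≤ (8*φ^2 - (2*φ - Real.sin (2*φ))) * rr δ^2 / (8 * Real.sin φ^2) :=
          div_nonneg (mul_nonneg (by linarith) (sq_nonneg _)) (by positivity)
        linarith

lemma cs_bound {n : ℕ} (a c u w : Fin n → ℝ) :
    ((∑ i, a i * w i) - ∑ i, c i * u i)^2
      ≤ ((∑ i, a i^2) + ∑ i, c i^2) * ((∑ i, u i^2) + ∑ i, w i^2) := by
  have h1 := Finset.sum_mul_sq_le_sq_mul_sq Finset.univ a w
  have h2 := Finset.sum_mul_sq_le_sq_mul_sq Finset.univ c u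
  have hA : (0:ℝ) ≤ ∑ i, a i^2 := Finset.sum_nonneg fun i _ => sq_nonneg _
  have hC : (0:ℝ) ≤ ∑ i, c i^2 := Finset.sum_nonneg fun i _ => sq_nonneg _
  have hU : (0:ℝ) ≤ ∑ i, u i^2 := Finset.sum_nonneg fun i _ => sq_nonneg _
  have hW : (0:ℝ) ≤ ∑ i, w i^2 := Finset.sum_nonneg fun i _ => sq_nonneg _
  set P := ∑ i, a i * w i with hP
  set Q := ∑ i, c i * u i with hQ
  set A := ∑ i, a i^2
  set C := ∑ i, c i^2
  set U := ∑ i, u i^2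
  set W := ∑ i, w i^2
  have h12 : P^2*Q^2 ≤ (A*W)*(C*U) := mul_le_mul h1 h2 (sq_nonneg _) (mul_nonneg hA hW)
  have hM : 0 ≤ A*U + C*W := add_nonneg (mul_nonneg hA hU) (mul_nonneg hC hW)
  have hz2 : (2*P*Q)^2 ≤ (A*U + C*W)^2 := by nlinarith [h12, sq_nonneg (A*U - C*W)]
  have habs : |2*P*Q| ≤ A*U + C*W := by
    rw [← Real.sqrt_sq_eq_abs, ← Real.sqrt_sq hM]
    exact Real.sqrt_le_sqrt hz2
  have hneg := neg_abs_le (2*P*Q)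
  nlinarith [h1, h2, habs, hneg]

end AuxLemmas

set_option maxHeartbeats 1000000 in
open Heis in
/-- asymptotics d_ρ(r,t) = t/(2r) + o(t) as t → 0⁺, for fixed r ≠ 0, for the
Carnot–Carathéodory distance to ∂Π₀. -/
theorem dCC_asymptotics (n : ℕ) (hn : 1 ≤ n) (ccρ : Hpt n → ℝ)
    (hccρ : IsCCNorm ccρ) (x y : Fin n → ℝ)
    (hr : Real.sqrt ((∑ i, x i ^ 2) + ∑ i, y i ^ 2) ≠ 0) :
    Tendsto (fun t : ℝ =>
        (distCC ccρ {η : Hpt n | η.2.2 = 0} ((x, y, t) : Hpt n) -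
            t / (2 * Real.sqrt ((∑ i, x i ^ 2) + ∑ i, y i ^ 2))) / t)
      (nhdsWithin 0 (Ioi 0)) (nhds 0) := by
  have hπ3 : (3:ℝ) < π := Real.pi_gt_three
  set X := ∑ i, x i ^ 2 with hX
  set Y := ∑ i, y i ^ 2 with hY
  set r := Real.sqrt (X + Y) with hrdef
  have hrpos : 0 < r := lt_of_le_of_ne (Real.sqrt_nonneg _) (Ne.symm hr)
  have hXnn : 0 ≤ X := hX ▸ Finset.sum_nonneg fun i _ => sq_nonneg _
  have hYnn : 0 ≤ Y := hY ▸ Finset.sum_nonneg fun i _ => sq_nonneg _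
  have hr2 : r^2 = X + Y := Real.sq_sqrt (by linarith)
  have hXYpos : 0 < X + Y := by nlinarith
  haveI : Nonempty ({η : Hpt n | η.2.2 = 0} : Set (Hpt n)) := ⟨⟨(0, 0, 0), rfl⟩⟩
  rw [Metric.tendsto_nhdsWithin_nhds]
  intro ε hε
  refine ⟨r^3 * ε, by positivity, ?_⟩
  intro t htI hdist
  have ht : (0:ℝ) < t := htI
  have htlt : t < r^3 * ε := by
    rw [Real.dist_eq, sub_zero, abs_of_pos ht] at hdist; exact hdist
  -- lower bound
  have hlow : t/(2*r) - ε/2*t ≤ distCC ccρ {η : Hpt n | η.2.2 = 0} ((x, y, t) : Hpt n) := by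
    apply le_ciInf
    rintro ⟨⟨x', y', s'⟩, hb⟩
    have hb' : s' = 0 := hb
    set δ : Hpt n := hmul (hinv ((x', y', s') : Hpt n)) ((x, y, t) : Hpt n) with hδ
    obtain ⟨hge, hsq⟩ := rho_lower hccρ δ
    have hsum : ∑ i, (-x' i * y i - -y' i * x i)
        = (∑ i, (x i - x' i) * y i) - ∑ i, (y i - y' i) * x i := by
      rw [← Finset.sum_sub_distrib]
      exact Finset.sum_congr rfl fun i _ => by ring
    have hδt : δ.2.2 = t + 2 * ((∑ i, (x i - x' i) * y i) - ∑ i, (y i - y' i) * x i) := by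
      show -s' + t + 2 * ∑ i, ((-x') i * y i - (-y') i * x i) = _
      simp only [Pi.neg_apply]
      rw [hb', hsum]; ring
    have hrrδ : rr δ = Real.sqrt ((∑ i, (x i - x' i)^2) + ∑ i, (y i - y' i)^2) := by
      show Real.sqrt ((∑ i, ((-x') + x) i ^2) + ∑ i, ((-y') + y) i ^2) = _
      simp only [Pi.add_apply, Pi.neg_apply]
      congr 1
      congr 1
      · exact Finset.sum_congr rfl fun i _ => by ring
      · exact Finset.sum_congr rfl fun i _ => by ring
    set P := ∑ i, (x i - x' i) * y i with hPd
    set Q := ∑ i, (y i - y' i) * x i with hQd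
    have hcs := cs_bound (fun i => x i - x' i) (fun i => y i - y' i) x y
    have hr0nn : 0 ≤ rr δ := rr_nonneg δ
    have hr0sq : rr δ ^2 = (∑ i, (x i - x' i)^2) + ∑ i, (y i - y' i)^2 := by
      rw [hrrδ]; exact Real.sq_sqrt (by positivity)
    have hPQ : |P - Q| ≤ rr δ * r := by
      rw [← Real.sqrt_sq_eq_abs]
      calc Real.sqrt ((P-Q)^2) ≤ Real.sqrt ((rr δ^2) * (r^2)) := by
            apply Real.sqrt_le_sqrt
            rw [hr0sq, hr2]
            exact hcs
        _ = rr δ * r := by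
            rw [Real.sqrt_mul (sq_nonneg _), Real.sqrt_sq hr0nn, Real.sqrt_sq hrpos.le]
    rcases le_or_gt (t/(2*r) - ε/2*t) (rr δ) with hcase | hcase
    · linarith
    · have hm : t/(2*r) * (2*r) = t := div_mul_cancel₀ t (by positivity)
      have h1 : -(rr δ * r) ≤ P - Q := (abs_le.1 hPQ).1
      have h2 : rr δ * (2*r) < t - r*ε*t := by nlinarith
      have hs_lb : r*ε*t ≤ δ.2.2 := by rw [hδt]; nlinarith
      have habs : r*ε*t ≤ |δ.2.2| := le_trans hs_lb (le_abs_self _)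
      have hnn : 0 ≤ ccρ δ := le_trans hr0nn hge
      have hm2 : (t/(2*r))^2 * (4*r^2) = t^2 := by field_simp; ring
      have hsq' : (t/(2*r))^2 ≤ ccρ δ^2 := by
        nlinarith [mul_lt_mul_of_pos_left htlt ht, sq_nonneg r, mul_pos hrpos hrpos]
      have hfin : t/(2*r) ≤ ccρ δ := by
        nlinarith [div_pos ht (by positivity : (0:ℝ) < 2*r)]
      nlinarith [mul_pos (half_pos hε) ht]
  -- upper bound
  have hup : distCC ccρ {η : Hpt n | η.2.2 = 0} ((x, y, t) : Hpt n) ≤ t/(2*r) := by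
    set lam := t / (2*(X+Y)) with hlamd
    have hlampos : 0 < lam := div_pos ht (by linarith)
    have hmemb : ((x + lam • y, y - lam • x, (0:ℝ)) : Hpt n) ∈ {η : Hpt n | η.2.2 = 0} := rfl
    have hbdd : BddBelow (Set.range fun b : ({η : Hpt n | η.2.2 = 0} : Set (Hpt n)) =>
        ccρ (hmul (hinv (b : Hpt n)) ((x, y, t) : Hpt n))) := by
      refine ⟨0, ?_⟩
      rintro z ⟨b, rfl⟩
      exact le_trans (rr_nonneg _) (rho_lower hccρ _).1
    set δ₀ : Hpt n := hmul (hinv ((x + lam • y, y - lam • x, (0:ℝ)) : Hpt n)) ((x, y, t) : Hpt n)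
      with hδ₀d
    have hδ₀t : δ₀.2.2 = 0 := by
      show -0 + t + 2 * ∑ i, ((-(x + lam • y)) i * y i - (-(y - lam • x)) i * x i) = 0
      simp only [Pi.neg_apply, Pi.add_apply, Pi.sub_apply, Pi.smul_apply, smul_eq_mul]
      have hsum0 : ∑ i, (-(x i + lam * y i) * y i - -(y i - lam * x i) * x i)
          = -lam * (X + Y) := by
        rw [hX, hY, ← Finset.sum_add_distrib, Finset.mul_sum]
        exact Finset.sum_congr rfl fun i _ => by ring
      rw [hsum0, hlamd]
      field_simp
      ring
    have e1 : ∑ i, (-(x i + lam * y i) + x i)^2 = lam^2 * Y := by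
      rw [hY, Finset.mul_sum]
      exact Finset.sum_congr rfl fun i _ => by ring
    have e2 : ∑ i, (-(y i - lam * x i) + y i)^2 = lam^2 * X := by
      rw [hX, Finset.mul_sum]
      exact Finset.sum_congr rfl fun i _ => by ring
    have hrrδ₀ : rr δ₀ = t/(2*r) := by
      show Real.sqrt ((∑ i, ((-(x + lam • y)) + x) i ^2) + ∑ i, ((-(y - lam • x)) + y) i ^2) = _
      simp only [Pi.add_apply, Pi.neg_apply, Pi.sub_apply, Pi.smul_apply, smul_eq_mul]
      rw [e1, e2]
      have h3 : lam^2 * Y + lam^2 * X = lam^2 * r^2 := by rw [hr2]; ring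
      rw [h3, Real.sqrt_mul (sq_nonneg _), Real.sqrt_sq hlampos.le, Real.sqrt_sq hrpos.le]
      rw [hlamd, ← hr2]
      field_simp
    have hccδ₀ : ccρ δ₀ = t/(2*r) := by
      rw [← hrrδ₀]
      refine hccρ.2.1 δ₀ ?_ hδ₀t
      rw [hrrδ₀]
      positivity
    calc distCC ccρ {η : Hpt n | η.2.2 = 0} ((x, y, t) : Hpt n)
        ≤ ccρ δ₀ := ciInf_le hbdd (⟨((x + lam • y, y - lam • x, (0:ℝ)) : Hpt n), hmemb⟩)
      _ = t/(2*r) := hccδ₀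
  simp only [Real.dist_eq, sub_zero]
  rw [abs_div, abs_of_pos ht, div_lt_iff₀ ht]
  have h1 : |distCC ccρ {η : Hpt n | η.2.2 = 0} ((x, y, t) : Hpt n) - t/(2*r)| ≤ ε/2*t :=
    abs_le.2 ⟨by linarith, by linarith⟩
  have : ε/2*t < ε*t := by nlinarith
  linarith
end
end
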